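/- arXiv:2503.01587 — 6 statements merged into one kernel-verified Lean document; each statement's English description precedes it below -/
import Mathlib

section
/- Let Q ∈ ℝ^{d×d} be symmetric, R ∈ ℝ^{m×m} symmetric positive definite, A : ℝ^d → ℝ^{d×d} and B : ℝ^d → ℝ^{d×m} maps, and let P : ℝ^d → ℝ^{d×d} be differentiable at x with symmetric values, such that the SDRE holds at x: A(x)ᵀP(x) + P(x)A(x) − P(x)B(x)R⁻¹B(x)ᵀP(x) + Q = 0. Set g = 2P(x)x + φ(x), where φ(x)_i = xᵀ(∂P/∂x_i)(x)x. Then gᵀ(A(x)x) − (1/4) gᵀ B(x)R⁻¹B(x)ᵀ g + xᵀQx = E(x), where E(x) = φ(x)ᵀ( A_cl(x) x − (1/4) B(x)R⁻¹B(x)ᵀ φ(x) ) and A_cl(x) = A(x) − B(x)R⁻¹B(x)ᵀP(x) is the closed-loop matrix. -/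
open Matrix

attribute [local instance] Matrix.normedAddCommGroup Matrix.normedSpace

private lemma symm_dot_swap {d : ℕ} {M : Matrix (Fin d) (Fin d) ℝ} (hM : Mᵀ = M)
    (u v : Fin d → ℝ) : u ⬝ᵥ M.mulVec v = v ⬝ᵥ M.mulVec u := by
  rw [Matrix.dotProduct_mulVec, ← Matrix.mulVec_transpose, hM, dotProduct_comm]

/-- Substituting the gradient `g = 2P(x)x + φ(x)` of the SDRE ansatz into the HJB
equation leaves exactly the residual `E(x)`. -/
theorem stmt_3 (d m : ℕ)
    (Q : Matrix (Fin d) (Fin d) ℝ) (hQ : Q.IsSymm)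
    (R : Matrix (Fin m) (Fin m) ℝ) (hR : R.PosDef)
    (A : (Fin d → ℝ) → Matrix (Fin d) (Fin d) ℝ)
    (B : (Fin d → ℝ) → Matrix (Fin d) (Fin m) ℝ)
    (P : (Fin d → ℝ) → Matrix (Fin d) (Fin d) ℝ)
    (x : Fin d → ℝ)
    (hP : DifferentiableAt ℝ P x)
    (hPsymm : ∀ y, (P y).IsSymm)
    (hsdre : (A x)ᵀ * P x + P x * A x - P x * (B x * R⁻¹ * (B x)ᵀ) * P x + Q = 0)
    (φ : Fin d → ℝ)
    (hφ : ∀ i, φ i = x ⬝ᵥ (fderiv ℝ P x (Pi.single i 1)).mulVec x)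
    (g : Fin d → ℝ) (hg : g = (2 : ℝ) • (P x).mulVec x + φ)
    (Acl : Matrix (Fin d) (Fin d) ℝ)
    (hAcl : Acl = A x - B x * R⁻¹ * (B x)ᵀ * P x)
    (E : ℝ)
    (hE : E = φ ⬝ᵥ (Acl.mulVec x - (1 / 4 : ℝ) • (B x * R⁻¹ * (B x)ᵀ).mulVec φ)) :
    g ⬝ᵥ (A x).mulVec x
      - (1 / 4 : ℝ) * (g ⬝ᵥ (B x * R⁻¹ * (B x)ᵀ).mulVec g)
      + x ⬝ᵥ Q.mulVec x = E := by
  set S : Matrix (Fin d) (Fin d) ℝ := B x * R⁻¹ * (B x)ᵀ with hSdef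
  have hRsymm : Rᵀ = R := by simpa using hR.isHermitian.eq
  have hRinv : (R⁻¹)ᵀ = R⁻¹ := by
    rw [Matrix.transpose_nonsing_inv, hRsymm]
  have hSsymm : Sᵀ = S := by
    simp [hSdef, Matrix.transpose_mul, hRinv, Matrix.mul_assoc]
  have hPs : (P x)ᵀ = P x := hPsymm x
  set p : Fin d → ℝ := (P x).mulVec x with hp
  set a : Fin d → ℝ := (A x).mulVec x with ha
  -- Rewrite key quadratic forms
  have h1 : x ⬝ᵥ ((A x)ᵀ * P x).mulVec x = p ⬝ᵥ a := by
    rw [← Matrix.mulVec_mulVec, Matrix.dotProduct_mulVec, Matrix.vecMul_transpose,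
      dotProduct_comm]
  have h2 : x ⬝ᵥ (P x * A x).mulVec x = p ⬝ᵥ a := by
    rw [← Matrix.mulVec_mulVec, Matrix.dotProduct_mulVec, ← Matrix.mulVec_transpose, hPs]
  have h3 : x ⬝ᵥ (P x * S * P x).mulVec x = p ⬝ᵥ S.mulVec p := by
    rw [← Matrix.mulVec_mulVec, ← Matrix.mulVec_mulVec, Matrix.dotProduct_mulVec,
      ← Matrix.mulVec_transpose, hPs]
  -- The SDRE identity as a scalar equation
  have hq : x ⬝ᵥ Q.mulVec x = p ⬝ᵥ S.mulVec p - 2 * (p ⬝ᵥ a) := by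
    have := congrArg (fun M : Matrix (Fin d) (Fin d) ℝ => x ⬝ᵥ M.mulVec x) hsdre
    simp only [Matrix.add_mulVec, Matrix.sub_mulVec, dotProduct_add,
      dotProduct_sub, Matrix.zero_mulVec, dotProduct_zero] at this
    rw [h1, h2, h3] at this
    linarith
  -- expand g and E
  have hSswap : p ⬝ᵥ S.mulVec φ = φ ⬝ᵥ S.mulVec p := symm_dot_swap hSsymm p φ
  have hAclE : Acl.mulVec x = a - S.mulVec p := by
    rw [hAcl]
    simp [Matrix.sub_mulVec, ← Matrix.mulVec_mulVec, ha, hp, hSdef]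
  rw [hg, hE, hAclE]
  simp only [dotProduct_add, add_dotProduct, dotProduct_sub,
    smul_dotProduct, dotProduct_smul, Matrix.mulVec_add, Matrix.mulVec_smul,
    smul_eq_mul]
  rw [hq]
  have hpSp : p ⬝ᵥ S.mulVec p = p ⬝ᵥ S.mulVec p := rfl
  nlinarith [hSswap]
end

section
/- Let Q ∈ ℝ^{d×d} be symmetric, R ∈ ℝ^{m×m} symmetric positive definite, A : ℝ^d → ℝ^{d×d} and B : ℝ^d → ℝ^{d×m} maps, and let P : ℝ^d → ℝ^{d×d} be differentiable at x with symmetric values, satisfying the SDRE at x. Set g = 2P(x)x + φ(x) with φ(x)_i = xᵀ(∂P/∂x_i)(x)x, and E(x) = φ(x)ᵀ( A_cl(x)x − (1/4) B(x)R⁻¹B(x)ᵀφ(x) ) with A_cl(x) = A(x) − B(x)R⁻¹B(x)ᵀP(x). Then the function u ↦ gᵀ(A(x)x + B(x)u) + xᵀQx + uᵀRu − E(x) on ℝ^m attains its infimum, the infimum equals 0, and it is attained at u = −(1/2)R⁻¹B(x)ᵀg. -/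
open Matrix

attribute [local instance] Matrix.normedAddCommGroup Matrix.normedSpace

private theorem symm_dot {n : Type*} [Fintype n] (M : Matrix n n ℝ) (hM : Mᵀ = M)
    (v w : n → ℝ) : M.mulVec v ⬝ᵥ w = v ⬝ᵥ M.mulVec w := by
  conv_rhs => rw [Matrix.dotProduct_mulVec]
  rw [← Matrix.mulVec_transpose, hM]

/-- The map `u ↦ gᵀ(A(x)x + B(x)u) + xᵀQx + uᵀRu − E(x)` attains its infimum, the
infimum equals `0`, and it is attained at `u = −(1/2)R⁻¹B(x)ᵀg`. -/
theorem stmt_4 (d m : ℕ)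
    (Q : Matrix (Fin d) (Fin d) ℝ) (hQ : Q.IsSymm)
    (R : Matrix (Fin m) (Fin m) ℝ) (hR : R.PosDef)
    (A : (Fin d → ℝ) → Matrix (Fin d) (Fin d) ℝ)
    (B : (Fin d → ℝ) → Matrix (Fin d) (Fin m) ℝ)
    (P : (Fin d → ℝ) → Matrix (Fin d) (Fin d) ℝ)
    (x : Fin d → ℝ)
    (hP : DifferentiableAt ℝ P x)
    (hPsymm : ∀ y, (P y).IsSymm)
    (hsdre : (A x)ᵀ * P x + P x * A x - P x * (B x * R⁻¹ * (B x)ᵀ) * P x + Q = 0)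
    (φ : Fin d → ℝ)
    (hφ : ∀ i, φ i = x ⬝ᵥ (fderiv ℝ P x (Pi.single i 1)).mulVec x)
    (g : Fin d → ℝ) (hg : g = (2 : ℝ) • (P x).mulVec x + φ)
    (Acl : Matrix (Fin d) (Fin d) ℝ)
    (hAcl : Acl = A x - B x * R⁻¹ * (B x)ᵀ * P x)
    (E : ℝ)
    (hE : E = φ ⬝ᵥ (Acl.mulVec x - (1 / 4 : ℝ) • (B x * R⁻¹ * (B x)ᵀ).mulVec φ))
    (F : (Fin m → ℝ) → ℝ)
    (hF : F = fun u => g ⬝ᵥ ((A x).mulVec x + (B x).mulVec u)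
      + x ⬝ᵥ Q.mulVec x + u ⬝ᵥ R.mulVec u - E) :
    IsLeast (Set.range F) 0 ∧
      F (-(1 / 2 : ℝ) • (R⁻¹ * (B x)ᵀ).mulVec g) = 0 := by
  set a := A x with ha
  set b := B x with hb
  set p := P x with hp
  have hRdet : IsUnit R.det := isUnit_iff_ne_zero.mpr (ne_of_gt hR.det_pos)
  have hRR : R * R⁻¹ = 1 := Matrix.mul_nonsing_inv R hRdet
  have hRsymm : Rᵀ = R := by
    rw [← Matrix.conjTranspose_eq_transpose_of_trivial]; exact hR.isHermitian.eq
  have hRisymm : (R⁻¹)ᵀ = R⁻¹ := by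
    rw [Matrix.transpose_nonsing_inv, hRsymm]
  have hpsymm : pᵀ = p := hPsymm x
  set S := b * R⁻¹ * bᵀ with hS
  have hSsymm : Sᵀ = S := by
    rw [hS, Matrix.transpose_mul, Matrix.transpose_mul, Matrix.transpose_transpose,
      hRisymm, Matrix.mul_assoc]
  -- scalar abbreviations
  set px := p.mulVec x with hpx
  set α := px ⬝ᵥ a.mulVec x with hα
  set β := φ ⬝ᵥ a.mulVec x with hβ
  set γ := px ⬝ᵥ S.mulVec px with hγ
  set δ := φ ⬝ᵥ S.mulVec px with hδ
  set ε := φ ⬝ᵥ S.mulVec φ with hε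
  set q0 := x ⬝ᵥ Q.mulVec x with hq0
  -- SDRE in scalar form : 2α - γ + q0 = 0
  have hsdre' : 2 * α - γ + q0 = 0 := by
    have h1 := congrArg (fun M : Matrix (Fin d) (Fin d) ℝ => x ⬝ᵥ M.mulVec x) hsdre
    simp only [Matrix.add_mulVec, Matrix.sub_mulVec, dotProduct_add, dotProduct_sub,
      Matrix.zero_mulVec, dotProduct_zero, ← Matrix.mulVec_mulVec] at h1
    have e1 : x ⬝ᵥ aᵀ.mulVec (p.mulVec x) = α := by
      rw [Matrix.dotProduct_mulVec, Matrix.vecMul_transpose, dotProduct_comm]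
    have e2 : x ⬝ᵥ p.mulVec (a.mulVec x) = α :=
      (symm_dot p hpsymm x (a.mulVec x)).symm
    have e3 : x ⬝ᵥ p.mulVec (S.mulVec (p.mulVec x)) = γ :=
      (symm_dot p hpsymm x (S.mulVec (p.mulVec x))).symm
    rw [e1, e2, e3, ← hq0] at h1
    linarith
  -- the E in scalar form
  have hE' : E = β - δ - (1 / 4) * ε := by
    rw [hE, hAcl, Matrix.sub_mulVec, ← Matrix.mulVec_mulVec, dotProduct_sub,
      dotProduct_sub, dotProduct_smul, ← hβ, ← hpx, ← hδ, smul_eq_mul, ← hε]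
  -- w = bᵀ g ; u₀ the minimizer
  set w := bᵀ.mulVec g with hw
  set u₀ : Fin m → ℝ := -(1 / 2 : ℝ) • (R⁻¹ * bᵀ).mulVec g with hu₀
  have hRu₀ : R.mulVec u₀ = -(1 / 2 : ℝ) • w := by
    rw [hu₀, Matrix.mulVec_smul, Matrix.mulVec_mulVec, ← Matrix.mul_assoc, hRR,
      Matrix.one_mul, hw]
  have hgb : ∀ u : Fin m → ℝ, g ⬝ᵥ b.mulVec u = w ⬝ᵥ u := by
    intro u
    rw [Matrix.dotProduct_mulVec, ← Matrix.mulVec_transpose, hw]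
  -- g ⬝ S g = 4γ + 4δ + ε
  have hgSg : g ⬝ᵥ S.mulVec g = 4 * γ + 4 * δ + ε := by
    rw [hg]
    simp only [Matrix.mulVec_add, Matrix.mulVec_smul, dotProduct_add, add_dotProduct,
      smul_dotProduct, dotProduct_smul, smul_eq_mul]
    have c1 : px ⬝ᵥ S.mulVec φ = δ := by
      rw [← symm_dot S hSsymm, dotProduct_comm]
    rw [c1, ← hγ, ← hδ, ← hε]
    ring
  -- w ⬝ᵥ u₀ etc.
  have hwu₀ : w ⬝ᵥ u₀ = -(1 / 2) * (4 * γ + 4 * δ + ε) := by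
    have h3 : w ⬝ᵥ u₀ = -(1 / 2 : ℝ) * (w ⬝ᵥ R⁻¹.mulVec w) := by
      rw [hu₀, dotProduct_smul, smul_eq_mul, ← Matrix.mulVec_mulVec, ← hw]
    have h4 : g ⬝ᵥ S.mulVec g = w ⬝ᵥ R⁻¹.mulVec w := by
      rw [hS, ← Matrix.mulVec_mulVec, ← Matrix.mulVec_mulVec, hgb, hw]
    rw [h3, ← h4, hgSg]
  -- key identity : F u = (u - u₀) ⬝ᵥ R (u - u₀)
  have key : ∀ u : Fin m → ℝ, F u = (u - u₀) ⬝ᵥ R.mulVec (u - u₀) := by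
    intro u
    have lhs : F u = 2 * α + β + w ⬝ᵥ u + q0 + u ⬝ᵥ R.mulVec u - E := by
      simp only [hF]
      have : g ⬝ᵥ a.mulVec x = 2 * α + β := by
        rw [hg, add_dotProduct, smul_dotProduct, smul_eq_mul, ← hα, ← hβ]
      rw [dotProduct_add, hgb u, this]
    have rhs : (u - u₀) ⬝ᵥ R.mulVec (u - u₀)
        = u ⬝ᵥ R.mulVec u - 2 * (u ⬝ᵥ R.mulVec u₀) + u₀ ⬝ᵥ R.mulVec u₀ := by
      rw [Matrix.mulVec_sub, sub_dotProduct, dotProduct_sub, dotProduct_sub]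
      have : u₀ ⬝ᵥ R.mulVec u = u ⬝ᵥ R.mulVec u₀ := by
        rw [← symm_dot R hRsymm, dotProduct_comm]
      rw [this]; ring
    have c2 : u ⬝ᵥ R.mulVec u₀ = -(1 / 2) * (w ⬝ᵥ u) := by
      rw [hRu₀, dotProduct_smul, smul_eq_mul, dotProduct_comm]
    have c3 : u₀ ⬝ᵥ R.mulVec u₀ = -(1 / 2) * (w ⬝ᵥ u₀) := by
      rw [hRu₀, dotProduct_smul, smul_eq_mul, dotProduct_comm]
    rw [lhs, rhs, c2, c3, hwu₀, hE']
    linarith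
  have hFu₀ : F (-(1 / 2 : ℝ) • (R⁻¹ * bᵀ).mulVec g) = 0 := by
    rw [show -(1 / 2 : ℝ) • (R⁻¹ * bᵀ).mulVec g = u₀ from rfl, key, sub_self]
    simp
  refine ⟨⟨⟨u₀, by rw [key]; simp⟩, ?_⟩, hFu₀⟩
  rintro y ⟨u, rfl⟩
  rw [key]
  simpa using hR.posSemidef.dotProduct_mulVec_nonneg (u - u₀)
end

section
/- Let Q ∈ ℝ^{d×d} be symmetric positive semidefinite, R ∈ ℝ^{m×m} symmetric positive definite, A : ℝ^d → ℝ^{d×d}, B : ℝ^d → ℝ^{d×m} continuous maps, and let P : ℝ^d → ℝ^{d×d} be continuously differentiable with symmetric values, satisfying the SDRE at every point of ℝ^d. Define V_S(y) = yᵀP(y)y, φ(y)_i = yᵀ(∂P/∂y_i)(y)y, A_cl(y) = A(y) − B(y)R⁻¹B(y)ᵀP(y), E(y) = φ(y)ᵀ(A_cl(y)y − (1/4)B(y)R⁻¹B(y)ᵀφ(y)), and the corrected feedback ũ_S(y) = −(1/2)R⁻¹B(y)ᵀ(2P(y)y + φ(y)). Let y : [0,∞) → ℝ^d be differentiable with y(0)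 = x, y′(t) = A(y(t))y(t) + B(y(t))ũ_S(y(t)) for all t ≥ 0, and y(t) → 0 as t → ∞, and suppose t ↦ y(t)ᵀQ y(t) + ũ_S(y(t))ᵀR ũ_S(y(t)) and t ↦ E(y(t)) are integrable on [0,∞). Then V_S(x) = ∫₀^∞ ( y(t)ᵀQ y(t) + ũ_S(y(t))ᵀR ũ_S(y(t)) ) dt − ∫₀^∞ E(y(t)) dt. -/
open Matrix MeasureTheory Filter

attribute [local instance] Matrix.normedAddCommGroup Matrix.normedSpace

lemma aux_dot_transpose {n k : ℕ} (M : Matrix (Fin k) (Fin n) ℝ) (a : Fin n → ℝ) (b : Fin k → ℝ) :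
    (M *ᵥ a) ⬝ᵥ b = a ⬝ᵥ (Mᵀ *ᵥ b) := by
  rw [dotProduct_comm, Matrix.dotProduct_mulVec, dotProduct_comm, Matrix.mulVec_transpose]

lemma aux_dot_symm {n : ℕ} (M : Matrix (Fin n) (Fin n) ℝ) (h : Mᵀ = M)
    (a b : Fin n → ℝ) : a ⬝ᵥ (M *ᵥ b) = b ⬝ᵥ (M *ᵥ a) := by
  rw [dotProduct_comm, aux_dot_transpose, h]

lemma aux_sum_expand {d : ℕ} (vv zz : Fin d → ℝ) (Pz Mm : Matrix (Fin d) (Fin d) ℝ) :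
    ∑ i, (vv i * ∑ j, Pz i j * zz j + zz i * ∑ j, (Mm i j * zz j + Pz i j * vv j))
      = vv ⬝ᵥ Pz *ᵥ zz + zz ⬝ᵥ Mm *ᵥ zz + zz ⬝ᵥ Pz *ᵥ vv := by
  simp only [dotProduct, Matrix.mulVec, Finset.mul_sum, mul_add,
    Finset.sum_add_distrib]
  ring_nf

lemma aux_dot_sum_smul {d : ℕ} (vv zz : Fin d → ℝ) (F : Fin d → Matrix (Fin d) (Fin d) ℝ) :
    zz ⬝ᵥ (∑ i, vv i • F i) *ᵥ zz = (fun i => zz ⬝ᵥ F i *ᵥ zz) ⬝ᵥ vv := by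
  simp only [dotProduct, Matrix.mulVec, Matrix.sum_apply, Matrix.smul_apply,
    smul_eq_mul, Finset.mul_sum, Finset.sum_mul]
  have h1 : ∀ k : Fin d, (∑ j, ∑ i, zz k * (vv i * F i k j * zz j))
      = ∑ i, ∑ j, zz k * (vv i * F i k j * zz j) := fun k => Finset.sum_comm
  rw [Finset.sum_congr rfl fun k _ => h1 k, Finset.sum_comm]
  apply Finset.sum_congr rfl; intro i _
  apply Finset.sum_congr rfl; intro k _
  apply Finset.sum_congr rfl; intro j _
  ring

/-- Along the trajectory driven by the corrected SDRE feedback `ũ_S`, the SDRE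
value-function ansatz satisfies
`V_S(x) = ∫₀^∞ (yᵀQy + ũ_SᵀRũ_S) dt − ∫₀^∞ E(y(t)) dt`. -/
theorem stmt_5 (d m : ℕ)
    (Q : Matrix (Fin d) (Fin d) ℝ) (hQ : Q.PosSemidef)
    (R : Matrix (Fin m) (Fin m) ℝ) (hR : R.PosDef)
    (A : (Fin d → ℝ) → Matrix (Fin d) (Fin d) ℝ) (hA : Continuous A)
    (B : (Fin d → ℝ) → Matrix (Fin d) (Fin m) ℝ) (hB : Continuous B)
    (P : (Fin d → ℝ) → Matrix (Fin d) (Fin d) ℝ)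
    (hP : ContDiff ℝ 1 P) (hPsymm : ∀ y, (P y).IsSymm)
    (hsdre : ∀ y : Fin d → ℝ,
      (A y)ᵀ * P y + P y * A y - P y * (B y * R⁻¹ * (B y)ᵀ) * P y + Q = 0)
    (VS : (Fin d → ℝ) → ℝ) (hVS : VS = fun y => y ⬝ᵥ (P y).mulVec y)
    (φ : (Fin d → ℝ) → Fin d → ℝ)
    (hφ : ∀ y i, φ y i = y ⬝ᵥ (fderiv ℝ P y (Pi.single i 1)).mulVec y)
    (Acl : (Fin d → ℝ) → Matrix (Fin d) (Fin d) ℝ)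
    (hAcl : ∀ y, Acl y = A y - B y * R⁻¹ * (B y)ᵀ * P y)
    (E : (Fin d → ℝ) → ℝ)
    (hE : ∀ y, E y = φ y ⬝ᵥ
      ((Acl y).mulVec y - (1 / 4 : ℝ) • (B y * R⁻¹ * (B y)ᵀ).mulVec (φ y)))
    (uS : (Fin d → ℝ) → Fin m → ℝ)
    (huS : ∀ y, uS y = -(1 / 2 : ℝ) •
      (R⁻¹ * (B y)ᵀ).mulVec ((2 : ℝ) • (P y).mulVec y + φ y))
    (x : Fin d → ℝ) (y : ℝ → Fin d → ℝ)
    (hy0 : y 0 = x)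
    (hyderiv : ∀ t : ℝ, 0 ≤ t →
      HasDerivAt y ((A (y t)).mulVec (y t) + (B (y t)).mulVec (uS (y t))) t)
    (hylim : Tendsto y atTop (nhds 0))
    (hint1 : IntegrableOn
      (fun t : ℝ => y t ⬝ᵥ Q.mulVec (y t) + uS (y t) ⬝ᵥ R.mulVec (uS (y t)))
      (Set.Ici 0))
    (hint2 : IntegrableOn (fun t : ℝ => E (y t)) (Set.Ici 0)) :
    VS x =
      (∫ t in Set.Ici (0 : ℝ),
        (y t ⬝ᵥ Q.mulVec (y t) + uS (y t) ⬝ᵥ R.mulVec (uS (y t))))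
      - ∫ t in Set.Ici (0 : ℝ), E (y t) := by
  have hRsymm : Rᵀ = R := hR.1
  have hRdet : IsUnit R.det := (Matrix.isUnit_iff_isUnit_det R).1 hR.isUnit
  have hRinv_symm : (R⁻¹)ᵀ = R⁻¹ := by
    rw [Matrix.transpose_nonsing_inv, hRsymm]
  -- the key pointwise derivative identity
  have hVSderiv : ∀ t : ℝ, 0 ≤ t → HasDerivAt (fun s => VS (y s))
      (-(y t ⬝ᵥ Q.mulVec (y t) + uS (y t) ⬝ᵥ R.mulVec (uS (y t))) + E (y t)) t := by
    intro t ht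
    have hy := hyderiv t ht
    set z := y t with hz
    set v := (A z).mulVec z + (B z).mulVec (uS z) with hv
    have hPf : HasFDerivAt P (fderiv ℝ P z) z := ((hP.differentiable one_ne_zero) z).hasFDerivAt
    set M := fderiv ℝ P z v with hM
    have hMd : HasDerivAt (fun s => P (y s)) M t := hPf.comp_hasDerivAt t hy
    have hyi : ∀ i, HasDerivAt (fun s => y s i) (v i) t := fun i =>
      (ContinuousLinearMap.proj (R := ℝ) (φ := fun _ : Fin d => ℝ) i).hasFDerivAt.comp_hasDerivAt t hy
    have hPij : ∀ i j, HasDerivAt (fun s => P (y s) i j) (M i j) t := fun i j =>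
      (((ContinuousLinearMap.proj (R := ℝ) (φ := fun _ : Fin d => ℝ) j)).comp
        ((ContinuousLinearMap.proj (R := ℝ) (φ := fun _ : Fin d => Fin d → ℝ) i) :
          Matrix (Fin d) (Fin d) ℝ →L[ℝ] (Fin d → ℝ))).hasFDerivAt.comp_hasDerivAt t hMd
    have hsum : HasDerivAt (fun s => ∑ i, y s i * ∑ j, P (y s) i j * y s j)
        (∑ i, (v i * ∑ j, P z i j * z j + z i * ∑ j, (M i j * z j + P z i j * v j))) t :=
      HasDerivAt.fun_sum fun i _ =>
        (hyi i).mul (HasDerivAt.fun_sum fun j _ => (hPij i j).mul (hyi j))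
    have hfun : (fun s => VS (y s)) = fun s => ∑ i, y s i * ∑ j, P (y s) i j * y s j := by
      funext s; simp [hVS, Matrix.mulVec, dotProduct]
    set p := (P z).mulVec z with hp
    set f := φ z with hf
    set S := B z * R⁻¹ * (B z)ᵀ with hS
    set w := (2 : ℝ) • p + f with hw
    have hSsymm : Sᵀ = S := by
      rw [hS, Matrix.transpose_mul, Matrix.transpose_mul, Matrix.transpose_transpose,
        hRinv_symm, Matrix.mul_assoc]
    have hMz : z ⬝ᵥ M.mulVec z = f ⬝ᵥ v := by
      have hvs : v = ∑ i, v i • (Pi.single i 1 : Fin d → ℝ) := by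
        funext k
        simp [Pi.single_apply, Finset.sum_apply]
      have hMsum : M = ∑ i, v i • fderiv ℝ P z (Pi.single i 1) := by
        rw [hM]
        conv_lhs => rw [hvs]
        rw [map_sum]
        simp
      rw [hMsum, aux_dot_sum_smul]
      congr 1
      funext i
      rw [hf]
      exact (hφ z i).symm
    have hq : uS z = (-(1/2 : ℝ)) • ((R⁻¹ * (B z)ᵀ) *ᵥ w) := by
      rw [huS z]
    have hBu : (B z) *ᵥ (uS z) = (-(1/2 : ℝ)) • (S *ᵥ w) := by
      rw [hq, Matrix.mulVec_smul, Matrix.mulVec_mulVec, ← Matrix.mul_assoc, ← hS]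
    have hvv : v = (A z) *ᵥ z + (-(1/2 : ℝ)) • (S *ᵥ w) := by rw [hv, hBu]
    have hSw : S *ᵥ w = (2 : ℝ) • (S *ᵥ p) + S *ᵥ f := by
      rw [hw, Matrix.mulVec_add, Matrix.mulVec_smul]
    have hfSp : f ⬝ᵥ (S *ᵥ p) = p ⬝ᵥ (S *ᵥ f) := aux_dot_symm S hSsymm f p
    have e1 : p ⬝ᵥ v = p ⬝ᵥ ((A z) *ᵥ z) - p ⬝ᵥ (S *ᵥ p) - (1/2) * (p ⬝ᵥ (S *ᵥ f)) := by
      simp only [hvv, hSw, dotProduct_add, dotProduct_smul, smul_eq_mul]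
      ring
    have e2 : f ⬝ᵥ v = f ⬝ᵥ ((A z) *ᵥ z) - p ⬝ᵥ (S *ᵥ f) - (1/2) * (f ⬝ᵥ (S *ᵥ f)) := by
      simp only [hvv, hSw, dotProduct_add, dotProduct_smul, smul_eq_mul]
      rw [hfSp]; ring
    have hRq : R *ᵥ ((R⁻¹ * (B z)ᵀ) *ᵥ w) = (B z)ᵀ *ᵥ w := by
      rw [Matrix.mulVec_mulVec, ← Matrix.mul_assoc, Matrix.mul_nonsing_inv R hRdet,
        Matrix.one_mul]
    have hqSw : ((R⁻¹ * (B z)ᵀ) *ᵥ w) ⬝ᵥ ((B z)ᵀ *ᵥ w) = w ⬝ᵥ (S *ᵥ w) := by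
      rw [aux_dot_transpose, Matrix.transpose_mul, Matrix.transpose_transpose, hRinv_symm,
        Matrix.mulVec_mulVec, hS]
    have hwSw : w ⬝ᵥ (S *ᵥ w) = 4 * (p ⬝ᵥ (S *ᵥ p)) + 4 * (p ⬝ᵥ (S *ᵥ f)) + f ⬝ᵥ (S *ᵥ f) := by
      simp only [hSw, hw, Matrix.mulVec_add, Matrix.mulVec_smul, add_dotProduct, smul_dotProduct, dotProduct_add,
        dotProduct_smul, smul_eq_mul]
      rw [hfSp]; ring
    have e3 : uS z ⬝ᵥ (R *ᵥ (uS z)) = p ⬝ᵥ (S *ᵥ p) + p ⬝ᵥ (S *ᵥ f) + (1/4) * (f ⬝ᵥ (S *ᵥ f)) := by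
      rw [hq, Matrix.mulVec_smul, smul_dotProduct, dotProduct_smul, hRq, hqSw, hwSw]
      simp only [smul_eq_mul]; ring
    have e4 : E z = f ⬝ᵥ ((A z) *ᵥ z) - p ⬝ᵥ (S *ᵥ f) - (1/4) * (f ⬝ᵥ (S *ᵥ f)) := by
      rw [hE z, hAcl z]
      simp only [← hS, ← hf]
      rw [Matrix.sub_mulVec, ← Matrix.mulVec_mulVec, ← hp]
      rw [dotProduct_sub, dotProduct_sub, dotProduct_smul, hfSp]
      simp only [smul_eq_mul]
    have e5 : z ⬝ᵥ (Q *ᵥ z) + 2 * (p ⬝ᵥ ((A z) *ᵥ z)) - p ⬝ᵥ (S *ᵥ p) = 0 := by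
      have h0 : z ⬝ᵥ (((A z)ᵀ * P z + P z * A z - P z * S * P z + Q) *ᵥ z) = 0 := by
        rw [hsdre z]; simp
      rw [Matrix.add_mulVec, Matrix.sub_mulVec, Matrix.add_mulVec, dotProduct_add,
        dotProduct_sub, dotProduct_add] at h0
      have t1 : z ⬝ᵥ (((A z)ᵀ * P z) *ᵥ z) = p ⬝ᵥ ((A z) *ᵥ z) := by
        rw [← Matrix.mulVec_mulVec, ← hp, ← aux_dot_transpose, dotProduct_comm]
      have t2 : z ⬝ᵥ ((P z * A z) *ᵥ z) = p ⬝ᵥ ((A z) *ᵥ z) := by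
        rw [← Matrix.mulVec_mulVec, aux_dot_symm (P z) (hPsymm z), ← hp, dotProduct_comm]
      have t3 : z ⬝ᵥ ((P z * S * P z) *ᵥ z) = p ⬝ᵥ (S *ᵥ p) := by
        rw [← Matrix.mulVec_mulVec, ← hp, ← Matrix.mulVec_mulVec,
          aux_dot_symm (P z) (hPsymm z), ← hp, dotProduct_comm]
      rw [t1, t2, t3] at h0
      linarith
    have hval : (∑ i, (v i * ∑ j, P z i j * z j + z i * ∑ j, (M i j * z j + P z i j * v j)))
        = -(z ⬝ᵥ Q.mulVec z + uS z ⬝ᵥ R.mulVec (uS z)) + E z := by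
      rw [aux_sum_expand v z (P z) M, hMz]
      have hPv : z ⬝ᵥ (P z) *ᵥ v = p ⬝ᵥ v := by
        rw [aux_dot_symm (P z) (hPsymm z), ← hp, dotProduct_comm]
      have hvp : v ⬝ᵥ ((P z) *ᵥ z) = p ⬝ᵥ v := by rw [← hp, dotProduct_comm]
      rw [hPv, hvp]
      rw [e4]
      linarith [e1, e2, e3, e5]
    rw [hfun]
    exact hval ▸ hsum
  -- continuity and limit of V_S along the trajectory
  have hVSfun : VS = fun yv : Fin d → ℝ => ∑ i, yv i * ∑ j, P yv i j * yv j := by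
    funext s; simp [hVS, Matrix.mulVec, dotProduct]
  have hVScont : Continuous VS := by
    rw [hVSfun]
    exact continuous_finset_sum _ fun i _ => (continuous_apply i).mul
      (continuous_finset_sum _ fun j _ =>
        (((continuous_apply j).comp ((continuous_apply i).comp hP.continuous)).mul
          (continuous_apply j)))
  have hVS0 : VS 0 = 0 := by simp [hVS]
  have htend : Tendsto (fun t => VS (y t)) atTop (nhds 0) := by
    have h := (hVScont.tendsto 0).comp hylim
    rwa [hVS0] at h
  have hioi : ∀ s ∈ Set.Ioi (0:ℝ), HasDerivAt (fun τ => VS (y τ))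
      (-(y s ⬝ᵥ Q.mulVec (y s) + uS (y s) ⬝ᵥ R.mulVec (uS (y s))) + E (y s)) s :=
    fun s hs => hVSderiv s (le_of_lt hs)
  have hint1' : IntegrableOn
      (fun s : ℝ => -(y s ⬝ᵥ Q.mulVec (y s) + uS (y s) ⬝ᵥ R.mulVec (uS (y s))))
      (Set.Ioi 0) := ((hint1.mono_set Set.Ioi_subset_Ici_self).neg)
  have hint2' : IntegrableOn (fun s : ℝ => E (y s)) (Set.Ioi 0) :=
    hint2.mono_set Set.Ioi_subset_Ici_self
  have hcw : ContinuousWithinAt (fun τ => VS (y τ)) (Set.Ici 0) 0 :=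
    (hVSderiv 0 le_rfl).continuousAt.continuousWithinAt
  have hmain := integral_Ioi_of_hasDerivAt_of_tendsto hcw hioi (hint1'.add hint2') htend
  rw [MeasureTheory.integral_add hint1' hint2', MeasureTheory.integral_neg] at hmain
  rw [MeasureTheory.integral_Ici_eq_integral_Ioi, MeasureTheory.integral_Ici_eq_integral_Ioi]
  rw [← hy0]
  linarith [hmain]
end

section
/- Let Q ∈ ℝ^{d×d} be symmetric positive semidefinite, R ∈ ℝ^{m×m} symmetric positive definite, A : ℝ^d → ℝ^{d×d}, B : ℝ^d → ℝ^{d×m} continuous maps, and let P : ℝ^d → ℝ^{d×d} be continuously differentiable with symmetric values, satisfying the SDRE at every point of ℝ^d. Define V_S(y) = yᵀP(y)y, φ(y)_i = yᵀ(∂P/∂y_i)(y)y, A_cl(y) = A(y) − B(y)R⁻¹B(y)ᵀP(y), and E(y) = φ(y)ᵀ(A_cl(y)y − (1/4)B(y)R⁻¹B(y)ᵀφ(y)). Let u : [0,∞) → ℝ^m be continuous and let y : [0,∞) → ℝ^d be differentiable with y(0) = x, y′(t) = A(y(t))y(t) + B(y(t))u(t) for all t ≥ 0, and y(t) → 0 as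 t → ∞, and suppose t ↦ y(t)ᵀQ y(t) + u(t)ᵀR u(t) and t ↦ E(y(t)) are integrable on [0,∞). Then V_S(x) ≤ ∫₀^∞ ( y(t)ᵀQ y(t) + u(t)ᵀR u(t) ) dt − ∫₀^∞ E(y(t)) dt. -/
open Matrix MeasureTheory Filter

attribute [local instance] Matrix.normedAddCommGroup Matrix.normedSpace

section Helpers

lemma dp_tr {k l : Type*} [Fintype k] [Fintype l] (M : Matrix k l ℝ) (v : l → ℝ) (w : k → ℝ) :
    v ⬝ᵥ Mᵀ *ᵥ w = w ⬝ᵥ M *ᵥ v := by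
  rw [dotProduct_mulVec, vecMul_transpose, dotProduct_comm]

lemma dp_tr' {k l : Type*} [Fintype k] [Fintype l] (M : Matrix k l ℝ) (v : k → ℝ) (w : l → ℝ) :
    (Mᵀ *ᵥ v) ⬝ᵥ w = v ⬝ᵥ M *ᵥ w := by
  rw [dotProduct_comm, dp_tr]

lemma dp_symm {k : Type*} [Fintype k] {M : Matrix k k ℝ} (hM : Mᵀ = M) (v w : k → ℝ) :
    v ⬝ᵥ M *ᵥ w = w ⬝ᵥ M *ᵥ v := by
  conv_lhs => rw [← hM]
  rw [dp_tr]

lemma dp_mulVec_left {k : Type*} [Fintype k] {M : Matrix k k ℝ} (hM : Mᵀ = M)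
    (v w : k → ℝ) : (M *ᵥ v) ⬝ᵥ w = v ⬝ᵥ (M *ᵥ w) := by
  rw [dotProduct_comm, dp_symm hM]

lemma alg {d m : ℕ} (Pm a Q S : Matrix (Fin d) (Fin d) ℝ) (b : Matrix (Fin d) (Fin m) ℝ)
    (R : Matrix (Fin m) (Fin m) ℝ)
    (hPs : Pmᵀ = Pm) (hRs : Rᵀ = R) (hRi : (R⁻¹)ᵀ = R⁻¹) (hRu : R * R⁻¹ = 1)
    (hS : S = b * R⁻¹ * bᵀ)
    (hsdre : aᵀ * Pm + Pm * a - Pm * S * Pm + Q = 0)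
    (yv : Fin d → ℝ) (uv : Fin m → ℝ) (φv : Fin d → ℝ) :
    (a *ᵥ yv + b *ᵥ uv) ⬝ᵥ Pm *ᵥ yv + φv ⬝ᵥ (a *ᵥ yv + b *ᵥ uv)
      + yv ⬝ᵥ Pm *ᵥ (a *ᵥ yv + b *ᵥ uv)
    = -(yv ⬝ᵥ Q *ᵥ yv + uv ⬝ᵥ R *ᵥ uv)
      + (φv ⬝ᵥ ((a - S * Pm) *ᵥ yv - (1/4 : ℝ) • (S *ᵥ φv)))
      + (uv + R⁻¹ *ᵥ (bᵀ *ᵥ (Pm *ᵥ yv + (1/2 : ℝ) • φv))) ⬝ᵥ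
          R *ᵥ (uv + R⁻¹ *ᵥ (bᵀ *ᵥ (Pm *ᵥ yv + (1/2:ℝ) • φv))) := by
  have hSs : Sᵀ = S := by
    rw [hS]; simp [Matrix.transpose_mul, hRi, Matrix.mul_assoc]
  have hsd : aᵀ * Pm + Pm * a = Pm * S * Pm - Q := by
    have h := hsdre; rwa [sub_add, sub_eq_zero] at h
  set pp : Fin d → ℝ := Pm *ᵥ yv with hpp
  set q : Fin d → ℝ := pp + (1/2 : ℝ) • φv with hq
  set k : Fin m → ℝ := bᵀ *ᵥ q with hk
  set T1 : ℝ := yv ⬝ᵥ (Pm * S * Pm) *ᵥ yv with hT1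
  set T2 : ℝ := yv ⬝ᵥ Q *ᵥ yv with hT2
  set T3 : ℝ := uv ⬝ᵥ R *ᵥ uv with hT3
  set T4 : ℝ := yv ⬝ᵥ (Pm * b) *ᵥ uv with hT4
  set T5 : ℝ := φv ⬝ᵥ a *ᵥ yv with hT5
  set T6 : ℝ := φv ⬝ᵥ b *ᵥ uv with hT6
  set T7 : ℝ := φv ⬝ᵥ (S * Pm) *ᵥ yv with hT7
  set T8 : ℝ := φv ⬝ᵥ S *ᵥ φv with hT8
  have hX1 : yv ⬝ᵥ (Pm * a) *ᵥ yv + yv ⬝ᵥ (Pm * a) *ᵥ yv = T1 - T2 := by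
    have e1 : yv ⬝ᵥ (aᵀ * Pm) *ᵥ yv = yv ⬝ᵥ (Pm * a) *ᵥ yv := by
      have h : aᵀ * Pm = (Pmᵀ * a)ᵀ := by rw [transpose_mul, transpose_transpose]
      rw [h, dp_tr, hPs]
    have e2 : yv ⬝ᵥ (aᵀ * Pm + Pm * a) *ᵥ yv = yv ⬝ᵥ (Pm * S * Pm - Q) *ᵥ yv := by rw [hsd]
    rw [add_mulVec, dotProduct_add, e1, sub_mulVec, dotProduct_sub] at e2
    exact e2
  have hL3 : yv ⬝ᵥ Pm *ᵥ (a *ᵥ yv + b *ᵥ uv) = yv ⬝ᵥ (Pm * a) *ᵥ yv + T4 := by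
    rw [mulVec_add, dotProduct_add, mulVec_mulVec, mulVec_mulVec]
  have hL1 : (a *ᵥ yv + b *ᵥ uv) ⬝ᵥ Pm *ᵥ yv = yv ⬝ᵥ Pm *ᵥ (a *ᵥ yv + b *ᵥ uv) := by
    rw [dp_symm hPs]
  have hL2 : φv ⬝ᵥ (a *ᵥ yv + b *ᵥ uv) = T5 + T6 := by rw [dotProduct_add]
  have hE' : φv ⬝ᵥ ((a - S * Pm) *ᵥ yv - (1/4 : ℝ) • (S *ᵥ φv))
      = T5 - T7 - (1/4 : ℝ) * T8 := by
    rw [dotProduct_sub, sub_mulVec, dotProduct_sub, dotProduct_smul, smul_eq_mul]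
  have hppbu : pp ⬝ᵥ b *ᵥ uv = T4 := by
    rw [hpp, dp_mulVec_left hPs, mulVec_mulVec]
  have hupk : uv ⬝ᵥ k = T4 + (1/2 : ℝ) * T6 := by
    rw [hk, dp_tr, hq, add_dotProduct, smul_dotProduct, smul_eq_mul, hppbu]
  have hRk : R *ᵥ (R⁻¹ *ᵥ k) = k := by rw [mulVec_mulVec, hRu, one_mulVec]
  have hcross : (R⁻¹ *ᵥ k) ⬝ᵥ R *ᵥ uv = uv ⬝ᵥ k := by
    rw [dotProduct_mulVec, ← mulVec_transpose, hRs, hRk, dotProduct_comm]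
  have hqSq : k ⬝ᵥ (R⁻¹ *ᵥ k) = T1 + T7 + (1/4 : ℝ) * T8 := by
    have h1 : k ⬝ᵥ (R⁻¹ *ᵥ k) = q ⬝ᵥ S *ᵥ q := by
      rw [hk, dp_tr', mulVec_mulVec, mulVec_mulVec, ← hS]
    have e1 : pp ⬝ᵥ S *ᵥ pp = T1 := by
      rw [hpp, dp_mulVec_left hPs, mulVec_mulVec, mulVec_mulVec, hT1, Matrix.mul_assoc]
    have e2 : pp ⬝ᵥ S *ᵥ φv = T7 := by
      rw [dp_symm hSs, hpp, mulVec_mulVec]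
    have e3 : φv ⬝ᵥ S *ᵥ pp = T7 := by rw [hpp, mulVec_mulVec]
    rw [h1, hq, mulVec_add, add_dotProduct, dotProduct_add, dotProduct_add,
      mulVec_smul, smul_dotProduct, dotProduct_smul, dotProduct_smul,
      smul_eq_mul, smul_eq_mul, smul_eq_mul, e1, e2, e3]
    rw [smul_dotProduct, smul_eq_mul, ← hT8]
    ring
  have hwRw : (uv + R⁻¹ *ᵥ k) ⬝ᵥ R *ᵥ (uv + R⁻¹ *ᵥ k)
      = T3 + 2 * (T4 + (1/2 : ℝ) * T6) + (T1 + T7 + (1/4 : ℝ) * T8) := by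
    rw [mulVec_add, dotProduct_add, add_dotProduct, add_dotProduct, hRk, hcross, hupk]
    have h2 : (R⁻¹ *ᵥ k) ⬝ᵥ k = T1 + T7 + (1/4 : ℝ) * T8 := by
      rw [dotProduct_comm, hqSq]
    rw [h2, ← hT3]
    ring
  rw [hL1, hL2, hL3, hE', hwRw]
  linarith [hX1]

lemma quadLin {d : ℕ} (z : Fin d → ℝ) :
    ∃ ψ : Matrix (Fin d) (Fin d) ℝ →ₗ[ℝ] ℝ, ∀ M, ψ M = z ⬝ᵥ M *ᵥ z :=
  ⟨{ toFun := fun M => z ⬝ᵥ M *ᵥ z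
     map_add' := fun M N => by
        show z ⬝ᵥ (M + N) *ᵥ z = z ⬝ᵥ M *ᵥ z + z ⬝ᵥ N *ᵥ z
        rw [add_mulVec, dotProduct_add]
     map_smul' := fun c M => by
        show z ⬝ᵥ (c • M) *ᵥ z = c • (z ⬝ᵥ M *ᵥ z)
        rw [smul_mulVec, dotProduct_smul] },
    fun M => rfl⟩

lemma fderiv_quad_eq {d : ℕ} (P : (Fin d → ℝ) → Matrix (Fin d) (Fin d) ℝ)
    (z v : Fin d → ℝ) :
    z ⬝ᵥ (fderiv ℝ P z v) *ᵥ z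
      = (fun i => z ⬝ᵥ (fderiv ℝ P z (Pi.single i 1)) *ᵥ z) ⬝ᵥ v := by
  obtain ⟨ψ, hψ⟩ := quadLin z
  have hv : v = ∑ i, v i • (Pi.single i 1 : Fin d → ℝ) := by
    ext j
    simp [Pi.single_apply]
  have hL : fderiv ℝ P z v = ∑ i, v i • fderiv ℝ P z (Pi.single i 1) := by
    conv_lhs => rw [hv]
    rw [map_sum]
    exact Finset.sum_congr rfl fun i _ => (fderiv ℝ P z).map_smul _ _
  calc z ⬝ᵥ (fderiv ℝ P z v) *ᵥ z = ψ (fderiv ℝ P z v) := (hψ _).symm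
    _ = ∑ i, v i • ψ (fderiv ℝ P z (Pi.single i 1)) := by
        rw [hL, map_sum]
        exact Finset.sum_congr rfl fun i _ => ψ.map_smul _ _
    _ = (fun i => z ⬝ᵥ (fderiv ℝ P z (Pi.single i 1)) *ᵥ z) ⬝ᵥ v := by
        rw [dotProduct]
        exact Finset.sum_congr rfl fun i _ => by rw [hψ, smul_eq_mul, mul_comm]

lemma hasDerivAt_quad {d : ℕ} (P : (Fin d → ℝ) → Matrix (Fin d) (Fin d) ℝ)
    (hP : ContDiff ℝ 1 P) {y : ℝ → (Fin d → ℝ)} {t : ℝ} {v : Fin d → ℝ}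
    (hy : HasDerivAt y v t) :
    HasDerivAt (fun s => y s ⬝ᵥ (P (y s)) *ᵥ (y s))
      (v ⬝ᵥ (P (y t)) *ᵥ (y t) + y t ⬝ᵥ ((fderiv ℝ P (y t)) v) *ᵥ (y t)
        + y t ⬝ᵥ (P (y t)) *ᵥ v) t := by
  have hyi : ∀ i, HasDerivAt (fun s => y s i) (v i) t := fun i => hasDerivAt_pi.mp hy i
  have hPy : HasDerivAt (fun s => P (y s)) (fderiv ℝ P (y t) v) t :=
    ((hP.differentiable one_ne_zero (y t)).hasFDerivAt).comp_hasDerivAt t hy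
  set W := fderiv ℝ P (y t) v with hW
  have hPij : ∀ i j, HasDerivAt (fun s => P (y s) i j) (W i j) t := by
    intro i j
    let L : Matrix (Fin d) (Fin d) ℝ →L[ℝ] ℝ :=
      LinearMap.toContinuousLinearMap (Matrix.entryLinearMap ℝ ℝ i j)
    exact L.hasFDerivAt.comp_hasDerivAt t hPy
  have hterm : ∀ i j, HasDerivAt (fun s => y s i * (P (y s) i j * y s j))
      (v i * (P (y t) i j * y t j)
        + y t i * (W i j * y t j + P (y t) i j * v j)) t :=
    fun i j => (hyi i).mul ((hPij i j).mul (hyi j))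
  have hsum : HasDerivAt (fun s => ∑ i, ∑ j, y s i * (P (y s) i j * y s j))
      (∑ i, ∑ j, (v i * (P (y t) i j * y t j)
        + y t i * (W i j * y t j + P (y t) i j * v j))) t :=
    HasDerivAt.fun_sum fun i _ => HasDerivAt.fun_sum fun j _ => hterm i j
  have hfun : (fun s => y s ⬝ᵥ (P (y s)) *ᵥ (y s))
      = fun s => ∑ i, ∑ j, y s i * (P (y s) i j * y s j) := by
    funext s
    simp [dotProduct, mulVec, Finset.mul_sum]
  have hval : (∑ i, ∑ j, (v i * (P (y t) i j * y t j)
        + y t i * (W i j * y t j + P (y t) i j * v j)))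
      = v ⬝ᵥ (P (y t)) *ᵥ (y t) + y t ⬝ᵥ W *ᵥ (y t) + y t ⬝ᵥ (P (y t)) *ᵥ v := by
    simp only [dotProduct, mulVec, Finset.mul_sum, ← Finset.sum_add_distrib]
    exact Finset.sum_congr rfl fun i _ => by
      exact Finset.sum_congr rfl fun j _ => by ring
  rw [hfun, ← hval]
  exact hsum

end Helpers

/-- Along any admissible stabilizing trajectory, the SDRE value-function ansatz
satisfies `V_S(x) ≤ ∫₀^∞ (yᵀQy + uᵀRu) dt − ∫₀^∞ E(y(t)) dt`. -/
theorem stmt_6 (d m : ℕ)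
    (Q : Matrix (Fin d) (Fin d) ℝ) (hQ : Q.PosSemidef)
    (R : Matrix (Fin m) (Fin m) ℝ) (hR : R.PosDef)
    (A : (Fin d → ℝ) → Matrix (Fin d) (Fin d) ℝ) (hA : Continuous A)
    (B : (Fin d → ℝ) → Matrix (Fin d) (Fin m) ℝ) (hB : Continuous B)
    (P : (Fin d → ℝ) → Matrix (Fin d) (Fin d) ℝ)
    (hP : ContDiff ℝ 1 P) (hPsymm : ∀ y, (P y).IsSymm)
    (hsdre : ∀ y : Fin d → ℝ,
      (A y)ᵀ * P y + P y * A y - P y * (B y * R⁻¹ * (B y)ᵀ) * P y + Q = 0)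
    (VS : (Fin d → ℝ) → ℝ) (hVS : VS = fun y => y ⬝ᵥ (P y).mulVec y)
    (φ : (Fin d → ℝ) → Fin d → ℝ)
    (hφ : ∀ y i, φ y i = y ⬝ᵥ (fderiv ℝ P y (Pi.single i 1)).mulVec y)
    (Acl : (Fin d → ℝ) → Matrix (Fin d) (Fin d) ℝ)
    (hAcl : ∀ y, Acl y = A y - B y * R⁻¹ * (B y)ᵀ * P y)
    (E : (Fin d → ℝ) → ℝ)
    (hE : ∀ y, E y = φ y ⬝ᵥ
      ((Acl y).mulVec y - (1 / 4 : ℝ) • (B y * R⁻¹ * (B y)ᵀ).mulVec (φ y)))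
    (x : Fin d → ℝ) (u : ℝ → Fin m → ℝ) (hu : Continuous u)
    (y : ℝ → Fin d → ℝ)
    (hy0 : y 0 = x)
    (hyderiv : ∀ t : ℝ, 0 ≤ t →
      HasDerivAt y ((A (y t)).mulVec (y t) + (B (y t)).mulVec (u t)) t)
    (hylim : Tendsto y atTop (nhds 0))
    (hint1 : IntegrableOn
      (fun t : ℝ => y t ⬝ᵥ Q.mulVec (y t) + u t ⬝ᵥ R.mulVec (u t))
      (Set.Ici 0))
    (hint2 : IntegrableOn (fun t : ℝ => E (y t)) (Set.Ici 0)) :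
    VS x ≤
      (∫ t in Set.Ici (0 : ℝ),
        (y t ⬝ᵥ Q.mulVec (y t) + u t ⬝ᵥ R.mulVec (u t)))
      - ∫ t in Set.Ici (0 : ℝ), E (y t) := by
  classical
  have hRs : Rᵀ = R := by
    rw [← Matrix.conjTranspose_eq_transpose_of_trivial]
    exact hR.1
  have hRi : (R⁻¹)ᵀ = R⁻¹ := by rw [Matrix.transpose_nonsing_inv, hRs]
  have hRu : R * R⁻¹ = 1 :=
    Matrix.mul_nonsing_inv R ((Matrix.isUnit_iff_isUnit_det R).mp hR.isUnit)
  set cost : ℝ → ℝ := fun t => y t ⬝ᵥ Q.mulVec (y t) + u t ⬝ᵥ R.mulVec (u t) with hcost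
  set g : ℝ → ℝ := fun s => y s ⬝ᵥ (P (y s)) *ᵥ (y s) with hgdef
  set c : ℝ → ℝ := fun s =>
    ((A (y s)) *ᵥ (y s) + (B (y s)) *ᵥ (u s)) ⬝ᵥ (P (y s)) *ᵥ (y s)
    + φ (y s) ⬝ᵥ ((A (y s)) *ᵥ (y s) + (B (y s)) *ᵥ (u s))
    + y s ⬝ᵥ (P (y s)) *ᵥ ((A (y s)) *ᵥ (y s) + (B (y s)) *ᵥ (u s)) with hcdef
  have hφfun : ∀ z : Fin d → ℝ,
      (fun i => z ⬝ᵥ (fderiv ℝ P z (Pi.single i 1)) *ᵥ z) = φ z := by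
    intro z; funext i; exact (hφ z i).symm
  have hgderiv : ∀ t : ℝ, 0 ≤ t → HasDerivAt g (c t) t := by
    intro t ht
    have h := hasDerivAt_quad P hP (hyderiv t ht)
    have hmid : y t ⬝ᵥ ((fderiv ℝ P (y t)) ((A (y t)) *ᵥ (y t) + (B (y t)) *ᵥ (u t))) *ᵥ (y t)
        = φ (y t) ⬝ᵥ ((A (y t)) *ᵥ (y t) + (B (y t)) *ᵥ (u t)) := by
      rw [fderiv_quad_eq, hφfun]
    rw [hmid] at h
    exact h
  have hineq : ∀ t : ℝ, 0 ≤ t → E (y t) - cost t ≤ c t := by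
    intro t ht
    have halg := alg (P (y t)) (A (y t)) Q (B (y t) * R⁻¹ * (B (y t))ᵀ) (B (y t)) R
      (hPsymm (y t)) hRs hRi hRu rfl (hsdre (y t)) (y t) (u t) (φ (y t))
    have hEt : E (y t) = φ (y t) ⬝ᵥ
        (((A (y t)) - (B (y t) * R⁻¹ * (B (y t))ᵀ) * P (y t)) *ᵥ (y t)
          - (1/4 : ℝ) • ((B (y t) * R⁻¹ * (B (y t))ᵀ) *ᵥ (φ (y t)))) := by
      rw [hE, hAcl]
    set w : Fin m → ℝ := u t + R⁻¹ *ᵥ ((B (y t))ᵀ *ᵥ ((P (y t)) *ᵥ (y t)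
      + (1/2 : ℝ) • φ (y t))) with hwdef
    have hw : 0 ≤ w ⬝ᵥ R *ᵥ w := by
      have := hR.posSemidef.dotProduct_mulVec_nonneg w
      simpa using this
    have hct : c t = -(cost t) + E (y t) + w ⬝ᵥ R *ᵥ w := by
      rw [hcdef, hcost, hEt]
      exact halg
    rw [hct]
    linarith
  -- FTC inequality on [0, T]
  have key : ∀ T : ℝ, 0 ≤ T →
      (∫ t in (0:ℝ)..T, (E (y t) - cost t)) ≤ g T - g 0 := by
    intro T hT
    refine intervalIntegral.integral_le_sub_of_hasDeriv_right_of_le (g' := c) hT ?_ ?_ ?_ ?_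
    · intro s hs
      exact (hgderiv s hs.1).continuousAt.continuousWithinAt
    · intro s hs
      exact (hgderiv s hs.1.le).hasDerivWithinAt
    · exact MeasureTheory.IntegrableOn.mono_set (hint2.sub hint1) Set.Icc_subset_Ici_self
    · intro s hs
      exact hineq s hs.1.le
  have hii1 : ∀ T : ℝ, 0 ≤ T → IntervalIntegrable cost volume 0 T := by
    intro T hT
    apply IntegrableOn.intervalIntegrable
    refine hint1.mono_set ?_
    rw [Set.uIcc_of_le hT]
    exact Set.Icc_subset_Ici_self
  have hii2 : ∀ T : ℝ, 0 ≤ T →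
      IntervalIntegrable (fun t => E (y t)) volume 0 T := by
    intro T hT
    apply IntegrableOn.intervalIntegrable
    refine hint2.mono_set ?_
    rw [Set.uIcc_of_le hT]
    exact Set.Icc_subset_Ici_self
  have hg0 : g 0 = VS x := by
    rw [hgdef, hVS]
    simp [hy0]
  have main : ∀ T : ℝ, 0 ≤ T →
      VS x ≤ g T + (∫ t in (0:ℝ)..T, cost t) - ∫ t in (0:ℝ)..T, E (y t) := by
    intro T hT
    have h := key T hT
    rw [intervalIntegral.integral_sub (hii2 T hT) (hii1 T hT)] at h
    linarith [hg0 ▸ h]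
  -- limits
  have hIoi1 : IntegrableOn cost (Set.Ioi (0:ℝ)) := hint1.mono_set Set.Ioi_subset_Ici_self
  have hIoi2 : IntegrableOn (fun t => E (y t)) (Set.Ioi (0:ℝ)) :=
    hint2.mono_set Set.Ioi_subset_Ici_self
  have l1 : Tendsto (fun T => ∫ t in (0:ℝ)..T, cost t) atTop
      (nhds (∫ t in Set.Ici (0:ℝ), cost t)) := by
    rw [MeasureTheory.integral_Ici_eq_integral_Ioi]
    exact MeasureTheory.intervalIntegral_tendsto_integral_Ioi 0 hIoi1 tendsto_id
  have l2 : Tendsto (fun T => ∫ t in (0:ℝ)..T, E (y t)) atTop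
      (nhds (∫ t in Set.Ici (0:ℝ), E (y t))) := by
    rw [MeasureTheory.integral_Ici_eq_integral_Ioi]
    exact MeasureTheory.intervalIntegral_tendsto_integral_Ioi 0 hIoi2 tendsto_id
  have hFcont : Continuous (fun z : Fin d → ℝ => z ⬝ᵥ (P z) *ᵥ z) :=
    Continuous.dotProduct continuous_id
      (Continuous.matrix_mulVec hP.continuous continuous_id)
  have l3 : Tendsto g atTop (nhds 0) := by
    have h := (hFcont.tendsto 0).comp hylim
    simp at h
    exact h
  have ltot : Tendsto (fun T => g T + (∫ t in (0:ℝ)..T, cost t) - ∫ t in (0:ℝ)..T, E (y t))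
      atTop (nhds ((0 : ℝ) + (∫ t in Set.Ici (0:ℝ), cost t) - ∫ t in Set.Ici (0:ℝ), E (y t))) :=
    (l3.add l1).sub l2
  rw [zero_add] at ltot
  exact ge_of_tendsto ltot (Filter.eventually_atTop.mpr ⟨0, fun T hT => main T hT⟩)
end

section
/- Let A₀, Ã ∈ ℝ^{d×d}, B ∈ ℝ^{d×m}, Q ∈ ℝ^{d×d} symmetric positive semidefinite, R ∈ ℝ^{m×m} symmetric positive definite, and set S = B R⁻¹ Bᵀ. Let P₀ ∈ ℝ^{d×d} be symmetric and satisfy the algebraic Riccati equation A₀ᵀP₀ + P₀A₀ − P₀SP₀ + Q = 0, and suppose the closed-loop matrix C₀ = A₀ − S P₀, viewed as a complex matrix, is diagonalizable, C₀ = V D V⁻¹ with D diagonal, where every eigenvalue of C₀ has negative real part; set α = min over eigenvalues λ of C₀ of |Re(λ)| and M = ‖V‖ ‖V⁻¹‖. Let W ∈ ℝ^{d×d} satisfy the Lyapunov equation W C₀ + C₀ᵀ W + P₀ Ã + Ãᵀ P₀ = 0. If M ‖Ã‖ ( 1 + ‖S‖ M² ‖P₀‖ / α ) < α (Euclidean operator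 norms), then the closed-loop matrix C = A₀ + Ã − S (P₀ + W) is Hurwitz, i.e., all its eigenvalues have negative real part. -/
open Matrix Set Filter MeasureTheory Topology
open scoped Matrix.Norms.L2Operator

namespace SDREaux

set_option linter.unusedSectionVars false

variable {n : Type*} [Fintype n] [DecidableEq n]

/-- Euclidean norm of a plain vector. -/
noncomputable def enormC (x : n → ℂ) : ℝ := ‖(WithLp.equiv 2 (n → ℂ)).symm x‖

lemma enorm_eq (x : n → ℂ) : enormC x = Real.sqrt (∑ i, ‖x i‖ ^ 2) := by
  rw [enormC, EuclideanSpace.norm_eq]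
  rfl

lemma opNorm_le_bound (A : Matrix n n ℂ) {c : ℝ} (hc : 0 ≤ c)
    (h : ∀ x : n → ℂ, enormC (A *ᵥ x) ≤ c * enormC x) : ‖A‖ ≤ c := by
  rw [Matrix.l2_opNorm_def]
  refine ContinuousLinearMap.opNorm_le_bound _ hc fun x => ?_
  simpa [enormC, Matrix.toEuclideanLin_apply] using h ((WithLp.equiv 2 (n → ℂ)) x)

lemma mulVec_enorm_le (A : Matrix n n ℂ) (x : n → ℂ) :
    enormC (A *ᵥ x) ≤ ‖A‖ * enormC x := by
  simpa [enormC] using A.l2_opNorm_mulVec ((WithLp.equiv 2 (n → ℂ)).symm x)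

lemma norm_diagonal_le {v : n → ℂ} {c : ℝ} (hc : 0 ≤ c) (h : ∀ i, ‖v i‖ ≤ c) :
    ‖(Matrix.diagonal v : Matrix n n ℂ)‖ ≤ c := by
  refine opNorm_le_bound _ hc fun x => ?_
  rw [enorm_eq, enorm_eq, ← Real.sqrt_sq hc, ← Real.sqrt_mul (by positivity)]
  refine Real.sqrt_le_sqrt ?_
  rw [Finset.mul_sum]
  refine Finset.sum_le_sum fun i _ => ?_
  simp only [Matrix.mulVec_diagonal, norm_mul, mul_pow]
  have h2 : ‖v i‖ ^ 2 ≤ c ^ 2 := by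
    have := h i; nlinarith [norm_nonneg (v i)]
  have h3 : (0:ℝ) ≤ ‖x i‖ ^ 2 := by positivity
  nlinarith [h2, h3]

end SDREaux

namespace SDREaux2
open SDREaux

variable {n : Type*} [Fintype n] [DecidableEq n]
set_option linter.unusedSectionVars false

lemma enorm_star (x : n → ℂ) : enormC (fun i => star (x i)) = enormC x := by
  simp [enorm_eq, norm_star]

lemma norm_map_star_le (A : Matrix n n ℂ) : ‖A.map star‖ ≤ ‖A‖ := by
  refine opNorm_le_bound _ (norm_nonneg A) fun x => ?_
  have key : A.map star *ᵥ x = fun i => star ((A *ᵥ fun j => star (x j)) i) := by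
    funext i
    simp only [Matrix.mulVec, Matrix.map_apply, dotProduct, star_sum, star_mul', star_star]
  rw [key]
  calc enormC (fun i => star ((A *ᵥ fun j => star (x j)) i))
      = enormC (A *ᵥ fun j => star (x j)) := enorm_star _
    _ ≤ ‖A‖ * enormC (fun j => star (x j)) := mulVec_enorm_le _ _
    _ = ‖A‖ * enormC x := by rw [enorm_star]

lemma norm_transpose_le (A : Matrix n n ℂ) : ‖Aᵀ‖ ≤ ‖A‖ := by
  have h : Aᵀ = (A.map star)ᴴ := by
    ext i j
    simp [Matrix.conjTranspose_apply, Matrix.map_apply]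
  rw [h, Matrix.l2_opNorm_conjTranspose]
  exact norm_map_star_le A

noncomputable def enormR (x : n → ℝ) : ℝ := ‖(WithLp.equiv 2 (n → ℝ)).symm x‖

lemma enormR_eq (x : n → ℝ) : enormR x = Real.sqrt (∑ i, x i ^ 2) := by
  rw [enormR, EuclideanSpace.norm_eq]
  simp [Real.norm_eq_abs, sq_abs]

lemma enormR_sq (x : n → ℝ) : enormR x ^ 2 = ∑ i, x i ^ 2 := by
  rw [enormR_eq, Real.sq_sqrt (by positivity)]

lemma mulVec_enormR_le (A : Matrix n n ℝ) (x : n → ℝ) :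
    enormR (A *ᵥ x) ≤ ‖A‖ * enormR x := by
  simpa [enormR] using A.l2_opNorm_mulVec ((WithLp.equiv 2 (n → ℝ)).symm x)

lemma norm_map_ofReal_le (A : Matrix n n ℝ) : ‖A.map Complex.ofReal‖ ≤ ‖A‖ := by
  refine opNorm_le_bound _ (norm_nonneg A) fun x => ?_
  set u : n → ℝ := fun i => (x i).re with hu
  set v : n → ℝ := fun i => (x i).im with hv
  have key : ∀ i, (A.map Complex.ofReal *ᵥ x) i
      = Complex.ofReal ((A *ᵥ u) i) + Complex.ofReal ((A *ᵥ v) i) * Complex.I := by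
    intro i
    apply Complex.ext <;>
      simp [Matrix.mulVec, dotProduct, Matrix.map_apply, Complex.mul_re, Complex.mul_im,
        Complex.re_sum, Complex.im_sum, hu, hv]
  have hsq : ∑ i, ‖(A.map Complex.ofReal *ᵥ x) i‖ ^ 2
      = enormR (A *ᵥ u) ^ 2 + enormR (A *ᵥ v) ^ 2 := by
    rw [enormR_sq, enormR_sq, ← Finset.sum_add_distrib]
    refine Finset.sum_congr rfl fun i _ => ?_
    rw [key i, Complex.sq_norm, Complex.normSq_apply]
    simp
    ring
  have hx : enormC x ^ 2 = enormR u ^ 2 + enormR v ^ 2 := by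
    rw [enorm_eq, Real.sq_sqrt (by positivity), enormR_sq, enormR_sq,
      ← Finset.sum_add_distrib]
    refine Finset.sum_congr rfl fun i _ => ?_
    rw [Complex.sq_norm, Complex.normSq_apply]
    ring
  have hbound : ∑ i, ‖(A.map Complex.ofReal *ᵥ x) i‖ ^ 2 ≤ (‖A‖ * enormC x) ^ 2 := by
    rw [hsq, mul_pow, hx, mul_add]
    have h1 := mulVec_enormR_le A u
    have h2 := mulVec_enormR_le A v
    have := norm_nonneg A
    have p1 : (0:ℝ) ≤ enormR (A *ᵥ u) := by rw [enormR_eq]; positivity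
    have p2 : (0:ℝ) ≤ enormR (A *ᵥ v) := by rw [enormR_eq]; positivity
    have p3 : (0:ℝ) ≤ enormR u := by rw [enormR_eq]; positivity
    have p4 : (0:ℝ) ≤ enormR v := by rw [enormR_eq]; positivity
    nlinarith [h1, h2, p1, p2, p3, p4]
  rw [enorm_eq]
  have he : (0:ℝ) ≤ enormC x := by rw [enorm_eq]; positivity
  have : (0:ℝ) ≤ ‖A‖ * enormC x := mul_nonneg (norm_nonneg A) he
  calc Real.sqrt (∑ i, ‖(A.map Complex.ofReal *ᵥ x) i‖ ^ 2)
      ≤ Real.sqrt ((‖A‖ * enormC x) ^ 2) := Real.sqrt_le_sqrt hbound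
    _ = ‖A‖ * enormC x := Real.sqrt_sq this

end SDREaux2

namespace SDREaux3
open SDREaux Real

lemma expIntegrableOn {c : ℂ} (hc : c.re < 0) :
    IntegrableOn (fun t : ℝ => Complex.exp (c * t)) (Ioi (0:ℝ)) := by
  have hb : (0:ℝ) < -c.re := by linarith
  refine Integrable.mono' (exp_neg_integrableOn_Ioi 0 hb) ?_ ?_
  · exact (Complex.continuous_exp.comp
      (continuous_const.mul Complex.continuous_ofReal)).aestronglyMeasurable
  · refine Eventually.of_forall fun t => ?_
    rw [Complex.norm_exp]
    apply le_of_eq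
    congr 1
    simp [Complex.mul_re]

lemma integral_exp_Ioi {c : ℂ} (hc : c.re < 0) :
    ∫ t in Set.Ioi (0:ℝ), Complex.exp (c * t) = -c⁻¹ := by
  have hc0 : c ≠ 0 := by
    intro h; rw [h] at hc; simp at hc
  have D : ∀ x : ℝ, HasDerivAt (fun y : ℝ => Complex.exp (c * y) / c) (Complex.exp (c * x)) x := by
    intro x
    conv => congr
    rw [← mul_div_cancel_right₀ (Complex.exp (c * x)) hc0]
    apply ((Complex.hasDerivAt_exp _).comp x _).div_const c
    simpa only [mul_one, id_eq] using ((hasDerivAt_id (x : ℂ)).const_mul _).comp_ofReal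
  have htend : Tendsto (fun y : ℝ => Complex.exp (c * y) / c) atTop (𝓝 0) := by
    rw [tendsto_zero_iff_norm_tendsto_zero]
    have h1 : Tendsto (fun y : ℝ => c.re * y) atTop atBot :=
      (tendsto_const_mul_atBot_of_neg hc).mpr tendsto_id
    have h2 : Tendsto (fun y : ℝ => Real.exp (c.re * y) / ‖c‖) atTop (𝓝 0) := by
      simpa using (Real.tendsto_exp_atBot.comp h1).div_const ‖c‖
    refine h2.congr fun y => ?_
    rw [norm_div, Complex.norm_exp]
    congr 2
    simp [Complex.mul_re]
  have := integral_Ioi_of_hasDerivAt_of_tendsto' (f := fun y : ℝ => Complex.exp (c * y) / c)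
    (fun x _ => D x) (expIntegrableOn hc) htend
  rw [this]
  simp [div_eq_mul_inv]

end SDREaux3

namespace SDREaux4
open SDREaux SDREaux3 Real

lemma integral_exp_neg_mul {b : ℝ} (hb : 0 < b) :
    ∫ t in Ioi (0:ℝ), Real.exp (-b * t) = b⁻¹ := by
  have hre : ((-b : ℝ) : ℂ).re < 0 := by simpa using hb
  have h := integral_exp_Ioi hre
  have heq : ∫ t in Ioi (0:ℝ), Complex.exp (((-b : ℝ) : ℂ) * t)
      = ((∫ t in Ioi (0:ℝ), Real.exp (-b * t) : ℝ) : ℂ) :=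
    calc ∫ t in Ioi (0:ℝ), Complex.exp (((-b : ℝ) : ℂ) * t)
        = ∫ t in Ioi (0:ℝ), (RCLike.ofReal (Real.exp (-b * t)) : ℂ) := by
          refine integral_congr_ae (Eventually.of_forall fun t => ?_)
          show Complex.exp (((-b : ℝ) : ℂ) * t) = ((Real.exp (-b * t) : ℝ) : ℂ)
          rw [Complex.ofReal_exp]
          congr 1
          push_cast
          ring
      _ = (RCLike.ofReal (∫ t in Ioi (0:ℝ), Real.exp (-b * t)) : ℂ) := integral_ofReal
      _ = ((∫ t in Ioi (0:ℝ), Real.exp (-b * t) : ℝ) : ℂ) := rfl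
  rw [heq] at h
  have : ((∫ t in Ioi (0:ℝ), Real.exp (-b * t) : ℝ) : ℂ) = ((b⁻¹ : ℝ) : ℂ) := by
    rw [h]; push_cast; ring
  exact_mod_cast this

variable {n : Type*} [Fintype n] [DecidableEq n]
set_option linter.unusedSectionVars false

lemma dotProduct_le (y z : n → ℂ) : ‖star y ⬝ᵥ z‖ ≤ enormC y * enormC z := by
  have h := norm_inner_le_norm (𝕜 := ℂ)
    ((WithLp.equiv 2 (n → ℂ)).symm y) ((WithLp.equiv 2 (n → ℂ)).symm z)
  rw [PiLp.inner_apply] at h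
  simpa [enormC, dotProduct, Pi.star_apply, RCLike.inner_apply, mul_comm] using h

lemma opNorm_le_of_dotProduct (A : Matrix n n ℂ) {c : ℝ} (hc : 0 ≤ c)
    (h : ∀ x y : n → ℂ, ‖star y ⬝ᵥ (A *ᵥ x)‖ ≤ c * enormC y * enormC x) : ‖A‖ ≤ c := by
  refine opNorm_le_bound A hc fun x => ?_
  set z := A *ᵥ x with hz
  have hzn : (0:ℝ) ≤ enormC z := by rw [enorm_eq]; positivity
  have hxn : (0:ℝ) ≤ enormC x := by rw [enorm_eq]; positivity
  have key : ‖star z ⬝ᵥ z‖ = enormC z ^ 2 := by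
    have : star z ⬝ᵥ z = ((∑ i, ‖z i‖ ^ 2 : ℝ) : ℂ) := by
      rw [dotProduct]
      push_cast
      refine Finset.sum_congr rfl fun i _ => ?_
      rw [Pi.star_apply, Complex.star_def, ← Complex.normSq_eq_conj_mul_self,
        ← Complex.sq_norm, Complex.ofReal_pow]
    rw [this, enorm_eq, Real.sq_sqrt (by positivity), Complex.norm_real,
      Real.norm_of_nonneg (by positivity)]
  have h2 := h x z
  rw [← hz, key] at h2
  rcases eq_or_lt_of_le hzn with h0 | h0
  · rw [← h0]; positivity
  · nlinarith

end SDREaux4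

namespace SDREaux5
open SDREaux SDREaux3 SDREaux4 Real

variable {n : Type*} [Fintype n] [DecidableEq n]
set_option linter.unusedSectionVars false
set_option maxHeartbeats 1000000

lemma lyap_norm_le {α : ℝ} (hα : 0 < α) (dg : n → ℂ) (hre : ∀ i, (dg i).re ≤ -α)
    (Q' W' : Matrix n n ℂ) (hform : ∀ i j, W' i j = -Q' i j / (dg i + dg j)) :
    ‖W'‖ ≤ ‖Q'‖ / (2 * α) := by
  have hc : (0:ℝ) ≤ ‖Q'‖ / (2 * α) := by positivity
  refine opNorm_le_of_dotProduct W' hc fun x y => ?_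
  set Et : ℝ → Matrix n n ℂ :=
    fun t => Matrix.diagonal (fun i => Complex.exp (dg i * t)) with hEt
  set s : ℝ → ℂ := fun t => star y ⬝ᵥ ((Et t * Q' * Et t) *ᵥ x) with hs
  have hre2 : ∀ i j : n, (dg i + dg j).re < 0 := by
    intro i j
    have := hre i; have := hre j
    simp only [Complex.add_re]
    linarith
  -- pointwise double sum formula
  have hsum : ∀ t : ℝ, s t
      = ∑ i, ∑ j, (star (y i) * x j * Q' i j) * Complex.exp ((dg i + dg j) * t) := by
    intro t
    rw [hs]
    simp only [dotProduct, Matrix.mulVec, dotProduct, Finset.mul_sum]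
    refine Finset.sum_congr rfl fun i _ => Finset.sum_congr rfl fun j _ => ?_
    have hentry : (Et t * Q' * Et t) i j
        = Q' i j * Complex.exp ((dg i + dg j) * t) := by
      rw [hEt]
      simp only [Matrix.mul_diagonal, Matrix.diagonal_mul, Complex.exp_add, add_mul]
      ring
    rw [hentry]
    simp only [Pi.star_apply]
    ring
  -- value of the integral
  have hval : ∫ t in Ioi (0:ℝ), s t = star y ⬝ᵥ (W' *ᵥ x) := by
    have hint : ∀ (i j : n), Integrable
        (fun t : ℝ => (star (y i) * x j * Q' i j) * Complex.exp ((dg i + dg j) * t))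
        (volume.restrict (Ioi (0:ℝ))) :=
      fun i j => (expIntegrableOn (hre2 i j)).const_mul _
    calc ∫ t in Ioi (0:ℝ), s t
        = ∫ t in Ioi (0:ℝ),
            ∑ i, ∑ j, (star (y i) * x j * Q' i j) * Complex.exp ((dg i + dg j) * t) :=
          integral_congr_ae (Eventually.of_forall fun t => hsum t)
      _ = ∑ i, ∑ j, ∫ t in Ioi (0:ℝ),
            (star (y i) * x j * Q' i j) * Complex.exp ((dg i + dg j) * t) := by
          rw [integral_finset_sum _ fun i _ => integrable_finset_sum _ fun j _ => hint i j]
          exact Finset.sum_congr rfl fun i _ => integral_finset_sum _ fun j _ => hint i j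
      _ = ∑ i, ∑ j, (star (y i) * x j * Q' i j) * (-(dg i + dg j)⁻¹) := by
          refine Finset.sum_congr rfl fun i _ => Finset.sum_congr rfl fun j _ => ?_
          rw [integral_const_mul, integral_exp_Ioi (hre2 i j)]
      _ = star y ⬝ᵥ (W' *ᵥ x) := by
          simp only [dotProduct, Matrix.mulVec, Finset.mul_sum]
          refine Finset.sum_congr rfl fun i _ => Finset.sum_congr rfl fun j _ => ?_
          rw [hform i j]
          simp only [Pi.star_apply, div_eq_mul_inv]
          ring
  -- pointwise norm bound
  have hbound : ∀ t ∈ Ioi (0:ℝ),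
      ‖s t‖ ≤ (enormC y * enormC x * ‖Q'‖) * Real.exp (-(2*α) * t) := by
    intro t ht
    have ht0 : (0:ℝ) ≤ t := le_of_lt ht
    have hEtn : ‖Et t‖ ≤ Real.exp (-α * t) := by
      refine norm_diagonal_le (by positivity) fun i => ?_
      rw [Complex.norm_exp]
      refine Real.exp_le_exp.mpr ?_
      have : (dg i * t).re = (dg i).re * t := by simp [Complex.mul_re]
      rw [this]
      exact mul_le_mul_of_nonneg_right (hre i) ht0
    have hyn : (0:ℝ) ≤ enormC y := by rw [enorm_eq]; positivity
    have hxn : (0:ℝ) ≤ enormC x := by rw [enorm_eq]; positivity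
    have hGn : ‖Et t * Q' * Et t‖ ≤ Real.exp (-α * t) * ‖Q'‖ * Real.exp (-α * t) := by
      have e1 : ‖Et t * Q' * Et t‖ ≤ ‖Et t‖ * ‖Q'‖ * ‖Et t‖ :=
        (Matrix.l2_opNorm_mul _ _).trans
          (mul_le_mul_of_nonneg_right (Matrix.l2_opNorm_mul _ _) (norm_nonneg _))
      refine e1.trans ?_
      have hE0 : (0:ℝ) ≤ ‖Et t‖ := norm_nonneg _
      have hexp : (0:ℝ) < Real.exp (-α * t) := Real.exp_pos _
      nlinarith [norm_nonneg Q', hEtn, mul_nonneg hE0 (norm_nonneg Q'),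
        mul_nonneg (le_of_lt hexp) (norm_nonneg Q'),
        mul_le_mul_of_nonneg_right hEtn (norm_nonneg Q')]
    calc ‖s t‖ ≤ enormC y * enormC ((Et t * Q' * Et t) *ᵥ x) := dotProduct_le _ _
      _ ≤ enormC y * (‖Et t * Q' * Et t‖ * enormC x) :=
          mul_le_mul_of_nonneg_left (mulVec_enorm_le _ _) hyn
      _ ≤ enormC y * ((Real.exp (-α * t) * ‖Q'‖ * Real.exp (-α * t)) * enormC x) := by
          refine mul_le_mul_of_nonneg_left (mul_le_mul_of_nonneg_right hGn hxn) hyn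
      _ = (enormC y * enormC x * ‖Q'‖) * Real.exp (-(2*α) * t) := by
          have hee : Real.exp (-α * t) * Real.exp (-α * t) = Real.exp (-(2*α) * t) := by
            rw [← Real.exp_add]; ring_nf
          rw [← hee]
          ring
  -- assemble
  have hdom : Integrable (fun t : ℝ => (enormC y * enormC x * ‖Q'‖) * Real.exp (-(2*α) * t))
      (volume.restrict (Ioi (0:ℝ))) :=
    (exp_neg_integrableOn_Ioi 0 (by positivity : (0:ℝ) < 2*α)).const_mul _
  have hnorm : ‖∫ t in Ioi (0:ℝ), s t‖
      ≤ ∫ t in Ioi (0:ℝ), (enormC y * enormC x * ‖Q'‖) * Real.exp (-(2*α) * t) :=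
    norm_integral_le_of_norm_le hdom
      ((ae_restrict_iff' measurableSet_Ioi).mpr (Eventually.of_forall hbound))
  rw [hval] at hnorm
  calc ‖star y ⬝ᵥ (W' *ᵥ x)‖
      ≤ ∫ t in Ioi (0:ℝ), (enormC y * enormC x * ‖Q'‖) * Real.exp (-(2*α) * t) := hnorm
    _ = (enormC y * enormC x * ‖Q'‖) * ((2*α)⁻¹) := by
        rw [integral_const_mul, integral_exp_neg_mul (by positivity : (0:ℝ) < 2*α)]
    _ = ‖Q'‖ / (2 * α) * enormC y * enormC x := by
        field_simp

end SDREaux5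

open SDREaux SDREaux2 SDREaux3 SDREaux4 SDREaux5

set_option maxHeartbeats 1600000 in
/-- Stability guarantee for the offline–online SDRE method: under the smallness
condition `M ‖Ã‖ (1 + ‖S‖ M² ‖P₀‖ / α) < α`, the closed-loop matrix
`C = A₀ + Ã − S (P₀ + W)` is Hurwitz. -/
theorem stmt_13 (d m : ℕ)
    (A₀ Atil : Matrix (Fin d) (Fin d) ℝ) (B : Matrix (Fin d) (Fin m) ℝ)
    (Q : Matrix (Fin d) (Fin d) ℝ) (hQ : Q.PosSemidef)
    (R : Matrix (Fin m) (Fin m) ℝ) (hR : R.PosDef)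
    (S : Matrix (Fin d) (Fin d) ℝ) (hS : S = B * R⁻¹ * Bᵀ)
    (P₀ : Matrix (Fin d) (Fin d) ℝ) (hP₀symm : P₀.IsSymm)
    (hric : A₀ᵀ * P₀ + P₀ * A₀ - P₀ * S * P₀ + Q = 0)
    (C₀ : Matrix (Fin d) (Fin d) ℝ) (hC₀ : C₀ = A₀ - S * P₀)
    (V D : Matrix (Fin d) (Fin d) ℂ) (hV : IsUnit V) (hD : D.IsDiag)
    (hdiag : C₀.map (Complex.ofReal) = V * D * V⁻¹)
    (hstab : ∀ μ ∈ spectrum ℂ (C₀.map (Complex.ofReal)), μ.re < 0)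
    (α : ℝ)
    (hα : IsLeast ((fun μ : ℂ => |μ.re|) '' spectrum ℂ (C₀.map (Complex.ofReal))) α)
    (M : ℝ) (hM : M = ‖V‖ * ‖V⁻¹‖)
    (W : Matrix (Fin d) (Fin d) ℝ)
    (hW : W * C₀ + C₀ᵀ * W + (P₀ * Atil + Atilᵀ * P₀) = 0)
    (hsmall : M * ‖Atil‖ * (1 + ‖S‖ * M ^ 2 * ‖P₀‖ / α) < α) :
    ∀ μ ∈ spectrum ℂ ((A₀ + Atil - S * (P₀ + W)).map (Complex.ofReal)), μ.re < 0 := by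
  intro μ hμ
  by_contra hre0
  push_neg at hre0
  classical
  set f : ℝ →+* ℂ := Complex.ofRealHom with hf
  set C₀c : Matrix (Fin d) (Fin d) ℂ := C₀.map Complex.ofReal with hC₀c
  set Ac : Matrix (Fin d) (Fin d) ℂ := Atil.map Complex.ofReal with hAc
  set Sc : Matrix (Fin d) (Fin d) ℂ := S.map Complex.ofReal with hSc
  set Pc : Matrix (Fin d) (Fin d) ℂ := P₀.map Complex.ofReal with hPc
  set Wc : Matrix (Fin d) (Fin d) ℂ := W.map Complex.ofReal with hWc0
  set dg : Fin d → ℂ := fun i => D i i with hdg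
  have hDdiag : Matrix.diagonal dg = D := hD.diagonal_diag
  have hdet : IsUnit V.det := (Matrix.isUnit_iff_isUnit_det V).mp hV
  have hdet0 : V.det ≠ 0 := by
    intro h; rw [h] at hdet; simpa using hdet
  have hVV : V * V⁻¹ = 1 := Matrix.mul_nonsing_inv V hdet
  have hVV' : V⁻¹ * V = 1 := Matrix.nonsing_inv_mul V hdet
  have hsm1 : ∀ z : ℂ, z • (1 : Matrix (Fin d) (Fin d) ℂ)
      = Matrix.diagonal (fun _ => z) := by
    intro z
    ext i j
    by_cases h : i = j <;>
      simp [Matrix.one_apply, Matrix.diagonal_apply, h]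
  -- each diagonal entry is in the spectrum of C₀c
  have hspec : ∀ i, dg i ∈ spectrum ℂ C₀c := by
    intro i
    rw [spectrum.mem_iff]
    intro hu
    have hfac : algebraMap ℂ (Matrix (Fin d) (Fin d) ℂ) (dg i) - C₀c
        = V * Matrix.diagonal (fun j => dg i - dg j) * V⁻¹ := by
      rw [Algebra.algebraMap_eq_smul_one, hdiag]
      have h1 : Matrix.diagonal (fun j : Fin d => dg i - dg j)
          = Matrix.diagonal (fun _ => dg i) - D := by
        rw [← hDdiag, Matrix.diagonal_sub]
      rw [h1, Matrix.mul_sub, Matrix.sub_mul]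
      congr 1
      rw [← hsm1, mul_smul_comm, Matrix.mul_one, smul_mul_assoc, hVV]
    rw [hfac] at hu
    have := (Matrix.isUnit_iff_isUnit_det _).mp hu
    rw [Matrix.det_mul, Matrix.det_mul, Matrix.det_diagonal] at this
    have hzero : ∏ j, (dg i - dg j) = 0 :=
      Finset.prod_eq_zero (Finset.mem_univ i) (sub_self _)
    rw [hzero] at this
    simpa using this
  have hα0 : 0 < α := by
    obtain ⟨μ₀, hμ₀, hα₀⟩ := hα.1
    have := hstab μ₀ hμ₀
    rw [← hα₀]
    exact abs_pos.mpr (ne_of_lt this)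
  have hrei : ∀ i, (dg i).re ≤ -α := by
    intro i
    have h1 : α ≤ |(dg i).re| := hα.2 ⟨dg i, hspec i, rfl⟩
    have h2 : (dg i).re < 0 := hstab _ (hspec i)
    rw [abs_of_neg h2] at h1
    linarith
  -- complexified Lyapunov equation
  have h0 : Wc * C₀c + C₀cᵀ * Wc + (Pc * Ac + Acᵀ * Pc) = 0 := by
    have h := congrArg (fun A => f.mapMatrix A) hW
    simp only [_root_.map_add, _root_.map_mul, _root_.map_zero, RingHom.mapMatrix_apply] at h
    have ht : (C₀ᵀ).map ⇑f = (C₀.map ⇑f)ᵀ := Matrix.transpose_map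
    have ht2 : (Atilᵀ).map ⇑f = (Atil.map ⇑f)ᵀ := Matrix.transpose_map
    rw [ht, ht2] at h
    exact h
  have hCV : C₀c * V = V * D := by
    rw [hdiag, Matrix.mul_assoc, hVV', Matrix.mul_one]
  have hVC : Vᵀ * C₀cᵀ = D * Vᵀ := by
    have h := congrArg Matrix.transpose hCV
    rw [Matrix.transpose_mul, Matrix.transpose_mul] at h
    rw [h]
    congr 1
    rw [← hDdiag, Matrix.diagonal_transpose]
  set W' : Matrix (Fin d) (Fin d) ℂ := Vᵀ * Wc * V with hW'
  set Q' : Matrix (Fin d) (Fin d) ℂ := Vᵀ * (Pc * Ac + Acᵀ * Pc) * V with hQ'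
  have hlyap : W' * D + D * W' + Q' = 0 := by
    have t1 : Vᵀ * (Wc * C₀c) * V = W' * D := by
      rw [← Matrix.mul_assoc, Matrix.mul_assoc (Vᵀ * Wc) C₀c V, hCV,
        ← Matrix.mul_assoc]
    have t2 : Vᵀ * (C₀cᵀ * Wc) * V = D * W' := by
      rw [← Matrix.mul_assoc, ← Matrix.mul_assoc, hVC,
        Matrix.mul_assoc, Matrix.mul_assoc, ← Matrix.mul_assoc Vᵀ Wc V,
        Matrix.mul_assoc D (Vᵀ * Wc) V]
    calc W' * D + D * W' + Q'
        = Vᵀ * (Wc * C₀c + C₀cᵀ * Wc + (Pc * Ac + Acᵀ * Pc)) * V := by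
          rw [Matrix.mul_add, Matrix.mul_add, Matrix.add_mul, Matrix.add_mul, t1, t2]
      _ = 0 := by rw [h0, Matrix.mul_zero, Matrix.zero_mul]
  have hre2 : ∀ i j : Fin d, (dg i + dg j).re < 0 := by
    intro i j
    have := hrei i; have := hrei j
    simp only [Complex.add_re]
    linarith
  have hform : ∀ i j, W' i j = -Q' i j / (dg i + dg j) := by
    intro i j
    have hne : dg i + dg j ≠ 0 := by
      intro h
      have := hre2 i j
      rw [h] at this
      simp at this
    have h := congrArg (fun A => A i j) hlyap
    simp only [Matrix.add_apply, Matrix.zero_apply, ← hDdiag, Matrix.mul_diagonal,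
      Matrix.diagonal_mul] at h
    field_simp
    linear_combination h
  have hWnorm' : ‖W'‖ ≤ ‖Q'‖ / (2 * α) := lyap_norm_le hα0 dg hrei Q' W' hform
  -- norm bounds
  have hnV : (0:ℝ) ≤ ‖V‖ := norm_nonneg _
  have hnVi : (0:ℝ) ≤ ‖V⁻¹‖ := norm_nonneg _
  have hM0 : 0 ≤ M := by rw [hM]; positivity
  have hα' : α ≠ 0 := ne_of_gt hα0
  have hQcn : ‖Pc * Ac + Acᵀ * Pc‖ ≤ 2 * ‖P₀‖ * ‖Atil‖ := by
    have h1 : ‖Pc * Ac‖ ≤ ‖P₀‖ * ‖Atil‖ :=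
      (Matrix.l2_opNorm_mul _ _).trans (mul_le_mul (norm_map_ofReal_le P₀)
        (norm_map_ofReal_le Atil) (norm_nonneg _) (norm_nonneg _))
    have h2 : ‖Acᵀ * Pc‖ ≤ ‖Atil‖ * ‖P₀‖ :=
      (Matrix.l2_opNorm_mul _ _).trans (mul_le_mul
        ((norm_transpose_le Ac).trans (norm_map_ofReal_le Atil))
        (norm_map_ofReal_le P₀) (norm_nonneg _) (norm_nonneg _))
    calc ‖Pc * Ac + Acᵀ * Pc‖ ≤ ‖Pc * Ac‖ + ‖Acᵀ * Pc‖ := norm_add_le _ _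
      _ ≤ 2 * ‖P₀‖ * ‖Atil‖ := by linarith
  have hQ'n : ‖Q'‖ ≤ ‖V‖ * (2 * ‖P₀‖ * ‖Atil‖) * ‖V‖ := by
    have h3 : ‖Vᵀ‖ * ‖Pc * Ac + Acᵀ * Pc‖ ≤ ‖V‖ * (2 * ‖P₀‖ * ‖Atil‖) :=
      mul_le_mul (norm_transpose_le V) hQcn (norm_nonneg _) hnV
    calc ‖Q'‖ ≤ ‖Vᵀ * (Pc * Ac + Acᵀ * Pc)‖ * ‖V‖ := Matrix.l2_opNorm_mul _ _
      _ ≤ (‖Vᵀ‖ * ‖Pc * Ac + Acᵀ * Pc‖) * ‖V‖ :=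
          mul_le_mul_of_nonneg_right (Matrix.l2_opNorm_mul _ _) hnV
      _ ≤ ‖V‖ * (2 * ‖P₀‖ * ‖Atil‖) * ‖V‖ := mul_le_mul_of_nonneg_right h3 hnV
  have hdetT : IsUnit Vᵀ.det := by rw [Matrix.det_transpose]; exact hdet
  have hVTi : Vᵀ⁻¹ * Vᵀ = 1 := Matrix.nonsing_inv_mul _ hdetT
  have hWcfac : Wc = Vᵀ⁻¹ * W' * V⁻¹ := by
    calc Wc = (Vᵀ⁻¹ * Vᵀ) * Wc * (V * V⁻¹) := by
          rw [hVTi, hVV, Matrix.one_mul, Matrix.mul_one]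
      _ = Vᵀ⁻¹ * (Vᵀ * Wc * V) * V⁻¹ := by simp only [Matrix.mul_assoc]
  have hWcn : α * ‖Wc‖ ≤ M ^ 2 * ‖P₀‖ * ‖Atil‖ := by
    have hT : ‖Vᵀ⁻¹‖ ≤ ‖V⁻¹‖ := by
      rw [← Matrix.transpose_nonsing_inv]
      exact norm_transpose_le _
    have h1 : ‖Wc‖ ≤ ‖V⁻¹‖ * ‖W'‖ * ‖V⁻¹‖ := by
      calc ‖Wc‖ = ‖Vᵀ⁻¹ * W' * V⁻¹‖ := by rw [← hWcfac]
        _ ≤ ‖Vᵀ⁻¹ * W'‖ * ‖V⁻¹‖ := Matrix.l2_opNorm_mul _ _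
        _ ≤ (‖Vᵀ⁻¹‖ * ‖W'‖) * ‖V⁻¹‖ :=
            mul_le_mul_of_nonneg_right (Matrix.l2_opNorm_mul _ _) hnVi
        _ ≤ ‖V⁻¹‖ * ‖W'‖ * ‖V⁻¹‖ :=
            mul_le_mul_of_nonneg_right
              (mul_le_mul_of_nonneg_right hT (norm_nonneg _)) hnVi
    have h2 : 2 * α * ‖W'‖ ≤ ‖Q'‖ := by
      have h2' : ‖W'‖ * (2 * α) ≤ ‖Q'‖ := by
        rw [← le_div_iff₀ (by positivity : (0:ℝ) < 2 * α)]
        exact hWnorm'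
      linarith
    have h3 : α * ‖W'‖ ≤ ‖V‖ ^ 2 * ‖P₀‖ * ‖Atil‖ := by nlinarith [h2, hQ'n]
    have h4 : α * ‖Wc‖ ≤ ‖V⁻¹‖ ^ 2 * (α * ‖W'‖) := by
      have := mul_le_mul_of_nonneg_left h1 (le_of_lt hα0)
      nlinarith [this]
    have h5 : ‖V⁻¹‖ ^ 2 * (α * ‖W'‖) ≤ ‖V⁻¹‖ ^ 2 * (‖V‖ ^ 2 * ‖P₀‖ * ‖Atil‖) :=
      mul_le_mul_of_nonneg_left h3 (by positivity)
    have h6 : ‖V⁻¹‖ ^ 2 * (‖V‖ ^ 2 * ‖P₀‖ * ‖Atil‖) = M ^ 2 * ‖P₀‖ * ‖Atil‖ := by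
      rw [hM]; ring
    linarith
  set Ec : Matrix (Fin d) (Fin d) ℂ := Ac - Sc * Wc with hEc
  have hEcn : ‖Ec‖ ≤ ‖Atil‖ + ‖S‖ * ‖Wc‖ := by
    have h1 := norm_map_ofReal_le Atil
    have h2 : ‖Sc * Wc‖ ≤ ‖S‖ * ‖Wc‖ :=
      (Matrix.l2_opNorm_mul _ _).trans
        (mul_le_mul_of_nonneg_right (norm_map_ofReal_le S) (norm_nonneg _))
    calc ‖Ec‖ ≤ ‖Ac‖ + ‖Sc * Wc‖ := norm_sub_le _ _
      _ ≤ ‖Atil‖ + ‖S‖ * ‖Wc‖ := by linarith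
  have hMEc : M * ‖Ec‖ < α := by
    have h5 : ‖Wc‖ ≤ M ^ 2 * ‖P₀‖ * ‖Atil‖ / α := by
      rw [le_div_iff₀ hα0]
      linarith [hWcn]
    have h6 : M * ‖Ec‖ ≤ M * ‖Atil‖ + M * ‖S‖ * ‖Wc‖ := by
      nlinarith [hEcn, hM0, norm_nonneg S, norm_nonneg Wc]
    have h7 : M * ‖S‖ * ‖Wc‖ ≤ M * ‖S‖ * (M ^ 2 * ‖P₀‖ * ‖Atil‖ / α) :=
      mul_le_mul_of_nonneg_left h5 (by positivity)
    calc M * ‖Ec‖ ≤ M * ‖Atil‖ + M * ‖S‖ * (M ^ 2 * ‖P₀‖ * ‖Atil‖ / α) := by linarith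
      _ = M * ‖Atil‖ * (1 + ‖S‖ * M ^ 2 * ‖P₀‖ / α) := by field_simp
      _ < α := hsmall
  -- Bauer–Fike argument
  set w : Fin d → ℂ := fun i => dg i - μ with hw
  have hwre : ∀ i, (w i).re ≤ -α := by
    intro i
    have := hrei i
    simp only [hw, Complex.sub_re]
    linarith
  have hwn : ∀ i, α ≤ ‖w i‖ := by
    intro i
    have h1 : |(w i).re| ≤ ‖w i‖ := Complex.abs_re_le_norm _
    have h2 : (w i).re ≤ -α := hwre i
    have h3 : α ≤ |(w i).re| := by
      rw [abs_of_nonpos (by linarith)]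
      linarith
    linarith
  have hw0 : ∀ i, w i ≠ 0 := by
    intro i h
    have := hwn i
    rw [h] at this
    simp at this
    linarith
  set Gi : Matrix (Fin d) (Fin d) ℂ := Matrix.diagonal (fun i => (w i)⁻¹) with hGi
  set G : Matrix (Fin d) (Fin d) ℂ := Matrix.diagonal w with hG
  have hGin : ‖Gi‖ ≤ α⁻¹ := by
    refine norm_diagonal_le (by positivity) fun i => ?_
    rw [norm_inv]
    exact inv_anti₀ hα0 (hwn i)
  have hGGi : G * Gi = 1 := by
    rw [hG, hGi, Matrix.diagonal_mul_diagonal]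
    have : (fun i => w i * (w i)⁻¹) = fun _ : Fin d => (1:ℂ) := by
      funext i
      exact mul_inv_cancel₀ (hw0 i)
    rw [this, Matrix.diagonal_one]
  set X : Matrix (Fin d) (Fin d) ℂ := Gi * (V⁻¹ * (Ec * V)) with hX
  have hXn : ‖X‖ < 1 := by
    have h1 : ‖Ec * V‖ ≤ ‖Ec‖ * ‖V‖ := Matrix.l2_opNorm_mul _ _
    have h2 : ‖V⁻¹ * (Ec * V)‖ ≤ ‖V⁻¹‖ * (‖Ec‖ * ‖V‖) :=
      (Matrix.l2_opNorm_mul _ _).trans (mul_le_mul_of_nonneg_left h1 hnVi)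
    have h3 : ‖X‖ ≤ α⁻¹ * (‖V⁻¹‖ * (‖Ec‖ * ‖V‖)) :=
      (Matrix.l2_opNorm_mul _ _).trans
        (mul_le_mul hGin h2 (norm_nonneg _) (by positivity))
    have h4 : ‖V⁻¹‖ * (‖Ec‖ * ‖V‖) = M * ‖Ec‖ := by rw [hM]; ring
    rw [h4] at h3
    calc ‖X‖ ≤ α⁻¹ * (M * ‖Ec‖) := h3
      _ < α⁻¹ * α := mul_lt_mul_of_pos_left hMEc (inv_pos.mpr hα0)
      _ = 1 := inv_mul_cancel₀ hα'
  have hunitX : IsUnit (1 + X) := by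
    have h : IsUnit (1 - -X) := ⟨Units.oneSub (-X) (by rwa [norm_neg]), rfl⟩
    rwa [sub_neg_eq_add] at h
  have hGunit : IsUnit G := by
    rw [Matrix.isUnit_iff_isUnit_det, hG, Matrix.det_diagonal]
    exact isUnit_iff_ne_zero.mpr (Finset.prod_ne_zero_iff.mpr fun i _ => hw0 i)
  have hViunit : IsUnit V⁻¹ := by
    rw [Matrix.isUnit_iff_isUnit_det, Matrix.det_nonsing_inv]
    exact isUnit_ringInverse.mpr hdet
  have hGD : G = D - μ • 1 := by
    rw [hG, hsm1, ← hDdiag, Matrix.diagonal_sub]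
  have hmid : V * G * V⁻¹ = C₀c - μ • 1 := by
    rw [hGD, Matrix.mul_sub, Matrix.sub_mul, hdiag]
    congr 1
    rw [mul_smul_comm, Matrix.mul_one, smul_mul_assoc, hVV]
  have hsecond : V * G * (X * V⁻¹) = Ec := by
    rw [hX]
    simp only [← Matrix.mul_assoc]
    rw [Matrix.mul_assoc V G Gi, hGGi, Matrix.mul_one, hVV, Matrix.one_mul,
      Matrix.mul_assoc, hVV, Matrix.mul_one]
  have hfact : C₀c + Ec - μ • (1 : Matrix (Fin d) (Fin d) ℂ) = V * G * (1 + X) * V⁻¹ := by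
    calc C₀c + Ec - μ • (1 : Matrix (Fin d) (Fin d) ℂ)
        = (C₀c - μ • 1) + Ec := by abel
      _ = V * G * V⁻¹ + V * G * (X * V⁻¹) := by rw [hmid, hsecond]
      _ = V * G * (1 + X) * V⁻¹ := by
          rw [Matrix.mul_add (V * G) 1 X, Matrix.mul_one, Matrix.add_mul,
            ← Matrix.mul_assoc (V * G) X V⁻¹]
  have htarget : (A₀ + Atil - S * (P₀ + W)).map Complex.ofReal = C₀c + Ec := by
    have hreal : A₀ + Atil - S * (P₀ + W) = C₀ + (Atil - S * W) := by
      rw [hC₀, Matrix.mul_add]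
      abel
    show f.mapMatrix (A₀ + Atil - S * (P₀ + W)) = C₀c + Ec
    rw [hreal]
    simp only [_root_.map_add, _root_.map_sub, _root_.map_mul, RingHom.mapMatrix_apply]
    rfl
  rw [spectrum.mem_iff] at hμ
  apply hμ
  have hneg : algebraMap ℂ (Matrix (Fin d) (Fin d) ℂ) μ
      - (A₀ + Atil - S * (P₀ + W)).map Complex.ofReal
      = -(C₀c + Ec - μ • 1) := by
    rw [htarget, Algebra.algebraMap_eq_smul_one]
    abel
  rw [hneg, hfact]
  exact (((hV.mul hGunit).mul hunitX).mul hViunit).neg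
end

section
/- Let A ∈ ℝ^{d×d} be Hurwitz (every complex eigenvalue of A has negative real part), and let g : ℝ^d → ℝ^d be continuous with g(0) = 0 and ‖g(y)‖/‖y‖ → 0 as y → 0. Then the origin is locally exponentially stable for the differential equation ẏ = A y + g(y): there exist δ > 0, K > 0 and β > 0 such that every differentiable function y : [0,∞) → ℝ^d satisfying y′(t) = A y(t) + g(y(t)) for all t ≥ 0 and ‖y(0)‖ ≤ δ satisfies ‖y(t)‖ ≤ K e^{−βt} ‖y(0)‖ for all t ≥ 0; in particular y(t) → 0 as t → ∞. -/
set_option maxHeartbeats 1000000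

open Filter Module Complex Finset

noncomputable section

lemma lemA' {d : ℕ} (f n s : Module.End ℂ (Fin d → ℂ)) (hfs : f = n + s)
    (hcomm : Commute n s) (hn_nil : IsNilpotent n)
    {ι : Type} [Fintype ι] [Nonempty ι] (bb : Basis ι ℂ (Fin d → ℂ)) (μv : ι → ℂ)
    (heig : ∀ i, s (bb i) = μv i • bb i) (hμ : ∀ i, (μv i).re < 0) :
    ∃ (m : ℕ) (L : (Fin d → ℂ) →ₗ[ℂ] EuclideanSpace ℂ (Fin m)) (β : ℝ),
      0 < β ∧ Function.Injective L ∧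
      ∀ x, (inner ℂ (L (f x)) (L x) : ℂ).re ≤ -β * ‖L x‖ ^ 2 := by
  classical
  obtain ⟨K0, hK0⟩ := hn_nil
  have hKnil : n ^ (K0 + 1) = 0 := by rw [pow_succ, hK0, zero_mul]
  set Kn := K0 + 1 with hKndef
  set β0 : ℝ := -(Finset.univ.sup' Finset.univ_nonempty fun i : ι => (μv i).re) with hβ0def
  have hβ0 : 0 < β0 := by
    rw [hβ0def, neg_pos]
    exact (Finset.sup'_lt_iff Finset.univ_nonempty).2 fun i _ => hμ i
  have hμle : ∀ i, (μv i).re ≤ -β0 := fun i => by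
    rw [hβ0def, neg_neg]
    exact Finset.le_sup' (fun j => (μv j).re) (Finset.mem_univ i)
  set ε : ℝ := β0 / 2 with hεdef
  have hε : 0 < ε := by positivity
  have hε' : (ε : ℂ) ≠ 0 := by exact_mod_cast hε.ne'
  -- the scaled coordinate map
  let L1 : (Fin d → ℂ) →ₗ[ℂ] EuclideanSpace ℂ (Fin Kn × ι) :=
    (WithLp.linearEquiv 2 ℂ (Fin Kn × ι → ℂ)).symm.toLinearMap.comp
      (LinearMap.pi fun p : Fin Kn × ι => ((ε : ℂ))⁻¹ ^ (p.1 : ℕ) •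
        ((Finsupp.lapply p.2).comp (bb.repr.toLinearMap.comp
          ((n ^ (p.1 : ℕ) : Module.End ℂ (Fin d → ℂ)) : (Fin d → ℂ) →ₗ[ℂ] (Fin d → ℂ)))))
  have happ : ∀ (x : Fin d → ℂ) (p : Fin Kn × ι),
      L1 x p = ((ε : ℂ))⁻¹ ^ (p.1 : ℕ) * bb.repr ((n ^ (p.1 : ℕ)) x) p.2 := by
    intro x p; rfl
  have hterm : ∀ (k : ℕ) (A B : ℂ),
      ((starRingEnd ℂ) (((ε : ℂ))⁻¹ ^ k * A) * (((ε : ℂ))⁻¹ ^ k * B)).re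
        = ((ε⁻¹ : ℝ) ^ k) ^ 2 * ((starRingEnd ℂ) A * B).re := by
    intro k A B
    have h : (starRingEnd ℂ) (((ε : ℂ))⁻¹ ^ k * A) * (((ε : ℂ))⁻¹ ^ k * B)
        = ((((ε⁻¹ : ℝ) ^ k) ^ 2 : ℝ) : ℂ) * ((starRingEnd ℂ) A * B) := by
      rw [map_mul, map_pow, map_inv₀, Complex.conj_ofReal]
      push_cast
      ring
    rw [h, Complex.re_ofReal_mul]
  -- sum formula for re-inner products
  have key : ∀ x y : Fin d → ℂ, (inner ℂ (L1 x) (L1 y) : ℂ).re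
      = ∑ k ∈ Finset.range Kn, ((ε⁻¹ : ℝ) ^ k) ^ 2 *
          ∑ i : ι, ((starRingEnd ℂ) (bb.repr ((n ^ k) x) i) * bb.repr ((n ^ k) y) i).re := by
    intro x y
    rw [PiLp.inner_apply]
    simp_rw [RCLike.inner_apply', happ]
    rw [Complex.re_sum]
    simp_rw [hterm]
    rw [Fintype.sum_prod_type,
      ← Fin.sum_univ_eq_sum_range (fun k => ((ε⁻¹ : ℝ) ^ k) ^ 2 *
        ∑ i : ι, ((starRingEnd ℂ) (bb.repr ((n ^ k) x) i) * bb.repr ((n ^ k) y) i).re) Kn]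
    refine Finset.sum_congr rfl fun k _ => ?_
    rw [Finset.mul_sum]
  -- norm formula
  have hnorm : ∀ x : Fin d → ℂ, ‖L1 x‖ ^ 2
      = ∑ k ∈ Finset.range Kn, ((ε⁻¹ : ℝ) ^ k) ^ 2 *
          ∑ i : ι, Complex.normSq (bb.repr ((n ^ k) x) i) := by
    intro x
    rw [← inner_self_eq_norm_sq (𝕜 := ℂ) (L1 x), RCLike.re_to_complex, key]
    refine Finset.sum_congr rfl fun k _ => ?_
    congr 1
    refine Finset.sum_congr rfl fun i _ => ?_
    rw [mul_comm ((starRingEnd ℂ) _), Complex.mul_conj, Complex.ofReal_re]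
  -- commutation of n^k with s
  have hns : ∀ (k : ℕ) (z : Fin d → ℂ), (n ^ k) (s z) = s ((n ^ k) z) := by
    intro k z
    have h := (hcomm.pow_left k).eq
    exact congrFun (congrArg (fun (g : Module.End ℂ (Fin d → ℂ)) => ⇑g) h) z
  -- coordinates of s
  have hrepr : ∀ (w : Fin d → ℂ) (i : ι), bb.repr (s w) i = μv i * bb.repr w i := by
    intro w i
    conv_lhs => rw [← bb.sum_repr w]
    rw [map_sum]
    simp_rw [map_smul, heig, smul_smul]
    have h := congrFun (bb.repr_sum_self fun j => bb.repr w j * μv j) i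
    rw [h]
    ring
  have hterm2 : ∀ (i : ι) (z : Fin d → ℂ),
      ((starRingEnd ℂ) (bb.repr (s z) i) * bb.repr z i).re
        = (μv i).re * Complex.normSq (bb.repr z i) := by
    intro i z
    rw [hrepr, map_mul]
    have h : (starRingEnd ℂ) (μv i) * (starRingEnd ℂ) (bb.repr z i) * bb.repr z i
        = (starRingEnd ℂ) (μv i) * (((bb.repr z i)) * (starRingEnd ℂ) (bb.repr z i)) := by ring
    rw [h, Complex.mul_conj]
    simp [Complex.mul_re]
  -- dissipativity of s-part
  have hsb : ∀ x : Fin d → ℂ, (inner ℂ (L1 (s x)) (L1 x) : ℂ).re ≤ -β0 * ‖L1 x‖ ^ 2 := by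
    intro x
    rw [key, hnorm, Finset.mul_sum]
    refine Finset.sum_le_sum fun k _ => ?_
    have h1 : ∀ i : ι, ((starRingEnd ℂ) (bb.repr ((n ^ k) (s x)) i) * bb.repr ((n ^ k) x) i).re
        = (μv i).re * Complex.normSq (bb.repr ((n ^ k) x) i) := by
      intro i; rw [hns k x, hterm2]
    rw [Finset.sum_congr rfl fun i _ => h1 i]
    have h2 : ∑ i : ι, (μv i).re * Complex.normSq (bb.repr ((n ^ k) x) i)
        ≤ ∑ i : ι, (-β0) * Complex.normSq (bb.repr ((n ^ k) x) i) :=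
      Finset.sum_le_sum fun i _ =>
        mul_le_mul_of_nonneg_right (hμle i) (Complex.normSq_nonneg _)
    have h3 : (0:ℝ) ≤ ((ε⁻¹ : ℝ) ^ k) ^ 2 := sq_nonneg _
    calc ((ε⁻¹ : ℝ) ^ k) ^ 2 * ∑ i : ι, (μv i).re * Complex.normSq (bb.repr ((n ^ k) x) i)
        ≤ ((ε⁻¹ : ℝ) ^ k) ^ 2 * ∑ i : ι, (-β0) * Complex.normSq (bb.repr ((n ^ k) x) i) :=
          mul_le_mul_of_nonneg_left h2 h3
      _ = -β0 * (((ε⁻¹ : ℝ) ^ k) ^ 2 * ∑ i : ι, Complex.normSq (bb.repr ((n ^ k) x) i)) := by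
          rw [← Finset.mul_sum]; ring
  -- nilpotent shrinking
  have hnb : ∀ x : Fin d → ℂ, ‖L1 (n x)‖ ^ 2 ≤ ε ^ 2 * ‖L1 x‖ ^ 2 := by
    intro x
    rw [hnorm, hnorm]
    set φ : ℕ → ℝ := fun k => ∑ i : ι, Complex.normSq (bb.repr ((n ^ k) x) i) with hφ
    have hφ0 : ∀ k, 0 ≤ φ k := fun k => Finset.sum_nonneg fun i _ => Complex.normSq_nonneg _
    have hφK : φ Kn = 0 := by
      simp [hφ, hKnil]
    have hL : ∀ k : ℕ, (n ^ k) (n x) = (n ^ (k + 1)) x := by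
      intro k
      rw [pow_succ]
      rfl
    calc ∑ k ∈ Finset.range Kn, ((ε⁻¹ : ℝ) ^ k) ^ 2 *
          ∑ i : ι, Complex.normSq (bb.repr ((n ^ k) (n x)) i)
        = ∑ k ∈ Finset.range Kn, ε ^ 2 * (((ε⁻¹ : ℝ) ^ (k+1)) ^ 2 * φ (k+1)) := by
          refine Finset.sum_congr rfl fun k _ => ?_
          rw [hL k]
          have : ∑ i : ι, Complex.normSq (bb.repr ((n ^ (k+1)) x) i) = φ (k+1) := rfl
          rw [this]
          have hε2 : ε ^ 2 * (ε⁻¹ : ℝ) ^ 2 = 1 := by rw [← mul_pow, mul_inv_cancel₀ hε.ne', one_pow]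
          linear_combination (-(((ε⁻¹ : ℝ) ^ k) ^ 2 * φ (k+1))) * hε2
      _ = ε ^ 2 * ∑ k ∈ Finset.range Kn, ((ε⁻¹ : ℝ) ^ (k+1)) ^ 2 * φ (k+1) := by
          rw [Finset.mul_sum]
      _ = ε ^ 2 * (∑ k ∈ Finset.range (Kn+1), ((ε⁻¹ : ℝ) ^ k) ^ 2 * φ k
            - ((ε⁻¹ : ℝ) ^ 0) ^ 2 * φ 0) := by
          rw [Finset.sum_range_succ' (fun k => ((ε⁻¹ : ℝ) ^ k) ^ 2 * φ k) Kn]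
          ring
      _ ≤ ε ^ 2 * ∑ k ∈ Finset.range (Kn+1), ((ε⁻¹ : ℝ) ^ k) ^ 2 * φ k := by
          have := hφ0 0
          nlinarith [sq_nonneg ((ε⁻¹ : ℝ) ^ 0), sq_nonneg ε, mul_nonneg (sq_nonneg ((ε⁻¹:ℝ)^0)) (hφ0 0)]
      _ = ε ^ 2 * (∑ k ∈ Finset.range Kn, ((ε⁻¹ : ℝ) ^ k) ^ 2 * φ k
            + ((ε⁻¹ : ℝ) ^ Kn) ^ 2 * φ Kn) := by
          rw [Finset.sum_range_succ]
      _ = ε ^ 2 * ∑ k ∈ Finset.range Kn, ((ε⁻¹ : ℝ) ^ k) ^ 2 * φ k := by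
          rw [hφK]; ring
  -- injectivity
  have hinj : Function.Injective L1 := by
    intro x y hxy
    have h0 : L1 (x - y) = 0 := by rw [map_sub, hxy, sub_self]
    have hco : ∀ i : ι, bb.repr (x - y) i = 0 := by
      intro i
      have h1 : L1 (x - y) (⟨0, Nat.succ_pos K0⟩, i) = 0 := by rw [h0]; rfl
      rw [happ] at h1
      simpa using h1
    have hxy0 : x - y = 0 := by
      have h2 : bb.repr (x - y) = 0 := Finsupp.ext fun i => hco i
      exact (LinearEquiv.map_eq_zero_iff bb.repr).1 h2
    exact sub_eq_zero.1 hxy0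
  -- main bound
  have main : ∀ x : Fin d → ℂ, (inner ℂ (L1 (f x)) (L1 x) : ℂ).re ≤ -ε * ‖L1 x‖ ^ 2 := by
    intro x
    have hfx : f x = n x + s x := by rw [hfs]; rfl
    rw [hfx, map_add, inner_add_left, Complex.add_re]
    have h3 : ‖L1 (n x)‖ ≤ ε * ‖L1 x‖ := by
      apply le_of_pow_le_pow_left₀ two_ne_zero (by positivity)
      rw [mul_pow]
      exact hnb x
    have h1 : (inner ℂ (L1 (n x)) (L1 x) : ℂ).re ≤ ε * ‖L1 x‖ ^ 2 := by
      calc (inner ℂ (L1 (n x)) (L1 x) : ℂ).re ≤ ‖(inner ℂ (L1 (n x)) (L1 x) : ℂ)‖ := by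
            rw [← RCLike.re_to_complex]; exact RCLike.re_le_norm _
        _ ≤ ‖L1 (n x)‖ * ‖L1 x‖ := norm_inner_le_norm _ _
        _ ≤ (ε * ‖L1 x‖) * ‖L1 x‖ := mul_le_mul_of_nonneg_right h3 (norm_nonneg _)
        _ = ε * ‖L1 x‖ ^ 2 := by ring
    have h4 := hsb x
    have h5 : β0 = 2 * ε := by rw [hεdef]; ring
    nlinarith [sq_nonneg ‖L1 x‖]
  -- reindex to a `Fin m`
  let e := Fintype.equivFin (Fin Kn × ι)
  let Liso := LinearIsometryEquiv.piLpCongrLeft 2 ℂ ℂ e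
  refine ⟨Fintype.card (Fin Kn × ι), Liso.toLinearEquiv.toLinearMap.comp L1, ε, hε, ?_, ?_⟩
  · exact Liso.injective.comp hinj
  · intro x
    simp only [LinearMap.comp_apply, LinearEquiv.coe_coe, LinearIsometryEquiv.coe_toLinearEquiv]
    rw [Liso.inner_map_map, Liso.norm_map]
    exact main x

lemma lemA {d : ℕ} (hd : 0 < d) (f : Module.End ℂ (Fin d → ℂ))
    (hf : ∀ μ ∈ spectrum ℂ f, μ.re < 0) :
    ∃ (m : ℕ) (L : (Fin d → ℂ) →ₗ[ℂ] EuclideanSpace ℂ (Fin m)) (β : ℝ),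
      0 < β ∧ Function.Injective L ∧
      ∀ x, (inner ℂ (L (f x)) (L x) : ℂ).re ≤ -β * ‖L x‖ ^ 2 := by
  classical
  obtain ⟨n, hn_mem, s, hs_mem, hn_nil, hs_ss, hfs⟩ :=
    Module.End.exists_isNilpotent_isSemisimple (f := f)
  rw [Algebra.adjoin_singleton_eq_range_aeval] at hn_mem hs_mem
  obtain ⟨p, hp⟩ := hn_mem
  obtain ⟨q, hq⟩ := hs_mem
  have hcomm : Commute n s := by
    rw [Commute, SemiconjBy, ← hp, ← hq, ← map_mul, ← map_mul, mul_comm]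
  have hspec : spectrum ℂ s ⊆ spectrum ℂ f := by
    intro μ hμ
    by_contra hμf
    rw [spectrum.notMem_iff] at hμf
    have hcnf : Commute n f := by
      rw [hfs]; exact (Commute.refl n).add_right hcomm
    have hcnu : Commute ((algebraMap ℂ (Module.End ℂ (Fin d → ℂ))) μ - f) n :=
      ((Algebra.commute_algebraMap_left μ n).sub_left hcnf.symm)
    set U := hμf.unit with hU
    have hUval : (U : Module.End ℂ (Fin d → ℂ)) = algebraMap ℂ _ μ - f := hμf.unit_spec
    have hcomm2 : Commute ((U⁻¹ : _ˣ) : Module.End ℂ (Fin d → ℂ)) n := by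
      have : Commute ((U : _ˣ) : Module.End ℂ (Fin d → ℂ)) n := by rw [hUval]; exact hcnu
      exact this.units_inv_left
    have hnil2 : IsNilpotent (((U⁻¹ : _ˣ) : Module.End ℂ (Fin d → ℂ)) * n) :=
      hcomm2.isNilpotent_mul_left hn_nil
    have hunit : IsUnit (algebraMap ℂ (Module.End ℂ (Fin d → ℂ)) μ - s) := by
      have h1 : IsUnit (1 + ((U⁻¹ : _ˣ) : Module.End ℂ (Fin d → ℂ)) * n) :=
        hnil2.isUnit_one_add
      have : algebraMap ℂ (Module.End ℂ (Fin d → ℂ)) μ - s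
          = (U : Module.End ℂ (Fin d → ℂ)) * (1 + ((U⁻¹ : _ˣ) : _) * n) := by
        rw [mul_add, mul_one, Units.mul_inv_cancel_left, hUval, hfs]
        abel
      rw [this]
      exact (Units.isUnit U).mul h1
    rw [spectrum.mem_iff] at hμ
    exact hμ hunit
  have htop : ⨆ μ : ℂ, s.eigenspace μ = ⊤ := by
    have h1 := Module.End.iSup_maxGenEigenspace_eq_top s
    have h2 := hs_ss.isFinitelySemisimple.maxGenEigenspace_eq_eigenspace
    simp_rw [h2] at h1
    exact h1
  have hint : DirectSum.IsInternal (fun μ : ℂ => s.eigenspace μ) :=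
    (DirectSum.isInternal_submodule_iff_iSupIndep_and_iSup_eq_top _).2
      ⟨s.eigenspaces_iSupIndep, htop⟩
  let bb : Basis ((μ : ℂ) × Fin (finrank ℂ (s.eigenspace μ))) ℂ (Fin d → ℂ) :=
    hint.collectedBasis (fun μ => Module.finBasis ℂ (s.eigenspace μ))
  haveI : Fintype ((μ : ℂ) × Fin (finrank ℂ (s.eigenspace μ))) :=
    FiniteDimensional.fintypeBasisIndex bb
  have heig : ∀ i, s (bb i) = i.1 • bb i := by
    intro i
    have := hint.collectedBasis_mem (fun μ => Module.finBasis ℂ (s.eigenspace μ)) i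
    rwa [Module.End.mem_eigenspace_iff] at this
  haveI : Nontrivial (Fin d → ℂ) := by
    refine ⟨fun _ => 0, fun _ => 1, fun h => ?_⟩
    simpa using congrFun h ⟨0, hd⟩
  haveI hne : Nonempty ((μ : ℂ) × Fin (finrank ℂ (s.eigenspace μ))) := bb.index_nonempty
  have hμneg : ∀ i : (μ : ℂ) × Fin (finrank ℂ (s.eigenspace μ)), (i.1).re < 0 := by
    intro i
    apply hf
    apply hspec
    rw [← Module.End.hasEigenvalue_iff_mem_spectrum]
    exact Module.End.hasEigenvalue_of_hasEigenvector ⟨by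
      rw [Module.End.mem_eigenspace_iff, heig i], bb.ne_zero i⟩
  exact lemA' f n s hfs hcomm hn_nil bb (fun i => i.1) heig hμneg


lemma lemDecay (V V' : ℝ → ℝ) (β θ : ℝ) (hβ : 0 < β) (hθ : 0 < θ)
    (hV : ∀ t, 0 ≤ t → HasDerivAt V (V' t) t)
    (hVnn : ∀ t, 0 ≤ t → 0 ≤ V t)
    (hbound : ∀ t, 0 ≤ t → V t < θ → V' t ≤ -β * V t)
    (hV0 : V 0 < θ) :
    ∀ t, 0 ≤ t → V t ≤ V 0 * Real.exp (-β * t) := by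
  set W : ℝ → ℝ := fun t => V t * Real.exp (β * t) with hW
  have hWd : ∀ t, 0 ≤ t →
      HasDerivAt W (V' t * Real.exp (β * t) + V t * (β * Real.exp (β * t))) t := by
    intro t ht
    have he : HasDerivAt (fun u : ℝ => Real.exp (β * u)) (β * Real.exp (β * t)) t := by
      have h1 := (Real.hasDerivAt_exp (β * t)).comp t ((hasDerivAt_id t).const_mul β)
      simpa [mul_comm, Function.comp_def] using h1
    exact (hV t ht).mul he
  have hanti : ∀ T, 0 ≤ T → (∀ s, 0 ≤ s → s < T → V s < θ) →
      AntitoneOn W (Set.Icc 0 T) := by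
    intro T hT hsmall
    apply antitoneOn_of_deriv_nonpos (convex_Icc 0 T)
    · intro t ht
      exact (hWd t ht.1).continuousAt.continuousWithinAt
    · intro t ht
      rw [interior_Icc] at ht
      exact (hWd t ht.1.le).differentiableAt.differentiableWithinAt
    · intro t ht
      rw [interior_Icc] at ht
      rw [(hWd t ht.1.le).deriv]
      have h1 := hbound t ht.1.le (hsmall t ht.1.le ht.2)
      have h2 : 0 < Real.exp (β * t) := Real.exp_pos _
      nlinarith
  have hesc : ∀ t, 0 ≤ t → V t < θ := by
    by_contra hB
    push_neg at hB
    obtain ⟨t0, ht0, hVt0⟩ := hB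
    set B := {t : ℝ | 0 ≤ t ∧ θ ≤ V t} with hBdef
    have hBne : B.Nonempty := ⟨t0, ht0, hVt0⟩
    have hBbd : BddBelow B := ⟨0, fun t ht => ht.1⟩
    set u := sInf B with hu
    have huB : u ∈ closure B := csInf_mem_closure hBne hBbd
    have hu0 : 0 ≤ u := le_csInf hBne fun t ht => ht.1
    have huV : θ ≤ V u := by
      have hcont : ContinuousWithinAt V B u := (hV u hu0).continuousAt.continuousWithinAt
      haveI hne : (nhdsWithin u B).NeBot := mem_closure_iff_nhdsWithin_neBot.1 huB
      exact ge_of_tendsto hcont (eventually_nhdsWithin_of_forall fun t ht => ht.2)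
    have hlt : ∀ s, 0 ≤ s → s < u → V s < θ := by
      intro s hs hsu
      by_contra h
      push_neg at h
      exact absurd (csInf_le hBbd ⟨hs, h⟩) (not_le.2 hsu)
    have h0u : (0:ℝ) ∈ Set.Icc 0 u := ⟨le_refl 0, hu0⟩
    have huu : u ∈ Set.Icc 0 u := ⟨hu0, le_refl u⟩
    have hWle := hanti u hu0 hlt h0u huu hu0
    have hWu : V u * Real.exp (β * u) ≤ V 0 := by simpa [hW] using hWle
    have hexp : 1 ≤ Real.exp (β * u) := Real.one_le_exp (by positivity)
    nlinarith [hVnn u hu0, hV0]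
  intro t ht
  have h1 := hanti t ht (fun s hs _ => hesc s hs) ⟨le_refl 0, ht⟩ ⟨ht, le_refl t⟩ ht
  have hWt : V t * Real.exp (β * t) ≤ V 0 := by simpa [hW] using h1
  have hep : 0 < Real.exp (β * t) := Real.exp_pos _
  have h2 : Real.exp (-β * t) = (Real.exp (β * t))⁻¹ := by
    rw [← Real.exp_neg]; ring_nf
  rw [h2, ← div_eq_mul_inv, le_div_iff₀ hep]
  exact hWt

/-- Lyapunov linearization principle: if `A` is Hurwitz and `g(y) = o(‖y‖)` near `0`,
then the origin is locally exponentially stable for `ẏ = A y + g(y)`. -/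
theorem stmt_14 (d : ℕ) (A : Matrix (Fin d) (Fin d) ℝ)
    (hA : ∀ μ ∈ spectrum ℂ (A.map (Complex.ofReal)), μ.re < 0)
    (g : (Fin d → ℝ) → Fin d → ℝ) (hg : Continuous g) (hg0 : g 0 = 0)
    (hsmall : Tendsto (fun y : Fin d → ℝ => ‖g y‖ / ‖y‖)
      (nhdsWithin 0 {0}ᶜ) (nhds 0)) :
    ∃ δ > (0 : ℝ), ∃ K > (0 : ℝ), ∃ β > (0 : ℝ),
      ∀ y : ℝ → Fin d → ℝ,
        (∀ t : ℝ, 0 ≤ t → HasDerivAt y (A.mulVec (y t) + g (y t)) t) →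
        ‖y 0‖ ≤ δ →
        (∀ t : ℝ, 0 ≤ t → ‖y t‖ ≤ K * Real.exp (-β * t) * ‖y 0‖) ∧
          Tendsto y atTop (nhds 0) := by
  rcases Nat.eq_zero_or_pos d with hd | hd
  · subst hd
    refine ⟨1, one_pos, 1, one_pos, 1, one_pos, fun y hy h0 => ⟨fun t ht => ?_, ?_⟩⟩
    · have h1 : y t = 0 := Subsingleton.elim _ _
      rw [h1, norm_zero]
      positivity
    · have h1 : y = fun _ => 0 := funext fun t => Subsingleton.elim _ _
      rw [h1]
      exact tendsto_const_nhds
  · -- the Hurwitz linear part as an endomorphism of ℂ^d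
    set f : Module.End ℂ (Fin d → ℂ) := Matrix.toLinAlgEquiv' (A.map Complex.ofReal) with hfdef
    have hfspec : ∀ μ ∈ spectrum ℂ f, μ.re < 0 := by
      intro μ hμ
      apply hA
      rwa [hfdef, AlgEquiv.spectrum_eq] at hμ
    obtain ⟨m, L, β, hβ, hLinj, hL⟩ := lemA hd f hfspec
    -- realification
    let J : (Fin d → ℝ) →ₗ[ℝ] (Fin d → ℂ) :=
      LinearMap.pi fun i => Complex.ofRealCLM.toLinearMap.comp (LinearMap.proj i)
    have hJ : ∀ (v : Fin d → ℝ) (i : Fin d), J v i = (v i : ℂ) := fun v i => rfl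
    have hJA : ∀ v : Fin d → ℝ, J (A.mulVec v) = f (J v) := by
      intro v
      funext i
      rw [hfdef]
      show ((A.mulVec v i : ℝ) : ℂ) = Matrix.toLinAlgEquiv' (A.map Complex.ofReal) (J v) i
      rw [Matrix.toLinAlgEquiv'_apply]
      simp only [Matrix.mulVec, dotProduct, Matrix.map_apply]
      push_cast
      rfl
    let M0 : (Fin d → ℝ) →ₗ[ℝ] EuclideanSpace ℂ (Fin m) := (L.restrictScalars ℝ).comp J
    let Mc : (Fin d → ℝ) →L[ℝ] EuclideanSpace ℂ (Fin m) := LinearMap.toContinuousLinearMap M0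
    have hMc : ∀ v, Mc v = L (J v) := fun v => rfl
    have hMker : LinearMap.ker M0 = ⊥ := by
      rw [LinearMap.ker_eq_bot]
      intro x y hxy
      have h1 : J x = J y := hLinj hxy
      funext i
      have h2 := congrFun h1 i
      rw [hJ, hJ] at h2
      exact_mod_cast h2
    obtain ⟨Ka, hKa0, hKa⟩ := LinearMap.exists_antilipschitzWith M0 hMker
    set Kar : ℝ := (Ka : ℝ) with hKardef
    have hKar0 : 0 < Kar := by exact_mod_cast hKa0
    have hKa' : ∀ v : Fin d → ℝ, ‖v‖ ≤ Kar * ‖Mc v‖ := by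
      intro v
      have h1 := hKa.le_mul_dist v 0
      rw [dist_zero_right] at h1
      have h2 : M0 0 = 0 := map_zero _
      calc ‖v‖ ≤ Kar * dist (M0 v) (M0 0) := h1
        _ = Kar * ‖Mc v‖ := by rw [h2, dist_zero_right]; rfl
    set CM : ℝ := ‖Mc‖ + 1 with hCMdef
    have hCM0 : 0 < CM := by positivity
    have hMle : ∀ v, ‖Mc v‖ ≤ CM * ‖v‖ := by
      intro v
      refine le_trans (Mc.le_opNorm v) ?_
      have := norm_nonneg v
      have := Mc.opNorm_nonneg
      nlinarith
    set ε0 : ℝ := β / (2 * CM * Kar) with hε0def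
    have hε00 : 0 < ε0 := by positivity
    obtain ⟨r, hr0, hgr⟩ : ∃ r > 0, ∀ v : Fin d → ℝ, ‖v‖ < r → ‖g v‖ ≤ ε0 * ‖v‖ := by
      rw [Metric.tendsto_nhdsWithin_nhds] at hsmall
      obtain ⟨δ', hδ'0, hδ'⟩ := hsmall ε0 hε00
      refine ⟨δ', hδ'0, fun v hv => ?_⟩
      rcases eq_or_ne v 0 with rfl | hv0
      · simp [hg0]
      · have hmem : v ∈ ({0}ᶜ : Set (Fin d → ℝ)) := hv0
        have hdist : dist v 0 < δ' := by rwa [dist_zero_right]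
        have h1 := hδ' hmem hdist
        rw [dist_zero_right] at h1
        have hvn : 0 < ‖v‖ := norm_pos_iff.2 hv0
        have h2 : ‖g v‖ / ‖v‖ < ε0 := by
          have h3 : ‖(‖g v‖ / ‖v‖)‖ = ‖g v‖ / ‖v‖ := by
            rw [Real.norm_eq_abs, _root_.abs_of_nonneg (by positivity)]
          rwa [h3] at h1
        have := (div_lt_iff₀ hvn).1 h2
        linarith
    set θ : ℝ := (r / (2 * Kar)) ^ 2 with hθdef
    have hθ0 : 0 < θ := by positivity
    set δ : ℝ := r / (4 * Kar * CM) with hδdef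
    have hδ0 : 0 < δ := by positivity
    refine ⟨δ, hδ0, Kar * CM + 1, by positivity, β / 2, by positivity, fun y hy hy0 => ?_⟩
    have hw : ∀ t, 0 ≤ t →
        HasDerivAt (fun u => Mc (y u)) (Mc (A.mulVec (y t) + g (y t))) t :=
      fun t ht => (Mc.hasFDerivAt).comp_hasDerivAt t (hy t ht)
    set V : ℝ → ℝ := fun t => ‖Mc (y t)‖ ^ 2 with hVdef
    set V' : ℝ → ℝ :=
      fun t => 2 * (inner ℂ (Mc (A.mulVec (y t) + g (y t))) (Mc (y t)) : ℂ).re with hV'def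
    have hVd : ∀ t, 0 ≤ t → HasDerivAt V (V' t) t := by
      intro t ht
      have h2 := HasDerivAt.inner ℂ (hw t ht) (hw t ht)
      have h3 := (Complex.reCLM.hasFDerivAt).comp_hasDerivAt t h2
      have hfun : V = ⇑Complex.reCLM ∘ (fun u => (inner ℂ (Mc (y u)) (Mc (y u)) : ℂ)) := by
        funext τ
        show ‖Mc (y τ)‖ ^ 2 = Complex.reCLM (inner ℂ (Mc (y τ)) (Mc (y τ)) : ℂ)
        rw [Complex.reCLM_apply, ← RCLike.re_to_complex, inner_self_eq_norm_sq]
      have h4 : HasDerivAt V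
          (Complex.reCLM ((inner ℂ (Mc (y t)) (Mc (A.mulVec (y t) + g (y t))) : ℂ)
            + (inner ℂ (Mc (A.mulVec (y t) + g (y t))) (Mc (y t)) : ℂ))) t := by
        rw [hfun]
        exact h3
      have h5 : Complex.reCLM ((inner ℂ (Mc (y t)) (Mc (A.mulVec (y t) + g (y t))) : ℂ)
            + (inner ℂ (Mc (A.mulVec (y t) + g (y t))) (Mc (y t)) : ℂ)) = V' t := by
        simp only [hV'def, Complex.reCLM_apply, Complex.add_re]
        have h6 : (inner ℂ (Mc (y t)) (Mc (A.mulVec (y t) + g (y t))) : ℂ).re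
            = (inner ℂ (Mc (A.mulVec (y t) + g (y t))) (Mc (y t)) : ℂ).re := by
          rw [← RCLike.re_to_complex, ← RCLike.re_to_complex, inner_re_symm]
        rw [h6]
        ring
      rwa [h5] at h4
    have hVnn : ∀ t, 0 ≤ t → 0 ≤ V t := by
      intro t _
      rw [hVdef]
      positivity
    have hVb : ∀ t, 0 ≤ t → V t < θ → V' t ≤ -β * V t := by
      intro t ht hVt
      have hwn : ‖Mc (y t)‖ < r / (2 * Kar) := by
        apply lt_of_pow_lt_pow_left₀ 2 (by positivity)
        rw [hVdef] at hVt
        rw [hθdef] at hVt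
        exact hVt
      have hyb : ‖y t‖ ≤ Kar * ‖Mc (y t)‖ := hKa' _
      have hyr : ‖y t‖ < r := by
        have h1 : Kar * ‖Mc (y t)‖ < Kar * (r / (2 * Kar)) :=
          mul_lt_mul_of_pos_left hwn hKar0
        have h2 : Kar * (r / (2 * Kar)) = r / 2 := by field_simp
        nlinarith
      have hgb : ‖g (y t)‖ ≤ ε0 * ‖y t‖ := hgr _ hyr
      have hsplit : (inner ℂ (Mc (A.mulVec (y t) + g (y t))) (Mc (y t)) : ℂ).re
          = (inner ℂ (Mc (A.mulVec (y t))) (Mc (y t)) : ℂ).re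
            + (inner ℂ (Mc (g (y t))) (Mc (y t)) : ℂ).re := by
        rw [map_add, inner_add_left, Complex.add_re]
      have hA1 : (inner ℂ (Mc (A.mulVec (y t))) (Mc (y t)) : ℂ).re ≤ -β * ‖Mc (y t)‖ ^ 2 := by
        have h1 := hL (J (y t))
        rw [← hJA] at h1
        rw [hMc, hMc]
        exact h1
      have hA2 : (inner ℂ (Mc (g (y t))) (Mc (y t)) : ℂ).re ≤ (β / 2) * ‖Mc (y t)‖ ^ 2 := by
        have hb1 : (inner ℂ (Mc (g (y t))) (Mc (y t)) : ℂ).re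
            ≤ ‖Mc (g (y t))‖ * ‖Mc (y t)‖ := by
          calc (inner ℂ (Mc (g (y t))) (Mc (y t)) : ℂ).re
              ≤ ‖(inner ℂ (Mc (g (y t))) (Mc (y t)) : ℂ)‖ := by
                rw [← RCLike.re_to_complex]; exact RCLike.re_le_norm _
            _ ≤ ‖Mc (g (y t))‖ * ‖Mc (y t)‖ := norm_inner_le_norm _ _
        have hb2 : ‖Mc (g (y t))‖ ≤ CM * (ε0 * (Kar * ‖Mc (y t)‖)) := by
          calc ‖Mc (g (y t))‖ ≤ CM * ‖g (y t)‖ := hMle _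
            _ ≤ CM * (ε0 * ‖y t‖) := by
                have := mul_le_mul_of_nonneg_left hgb hCM0.le
                linarith
            _ ≤ CM * (ε0 * (Kar * ‖Mc (y t)‖)) := by
                have h4 := mul_le_mul_of_nonneg_left hyb hε00.le
                have h5 := mul_le_mul_of_nonneg_left h4 hCM0.le
                linarith
        have hb3 : CM * (ε0 * (Kar * ‖Mc (y t)‖)) * ‖Mc (y t)‖
            = (β / 2) * ‖Mc (y t)‖ ^ 2 := by
          rw [hε0def]
          field_simp
        have hMn : (0:ℝ) ≤ ‖Mc (y t)‖ := norm_nonneg _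
        calc (inner ℂ (Mc (g (y t))) (Mc (y t)) : ℂ).re
            ≤ ‖Mc (g (y t))‖ * ‖Mc (y t)‖ := hb1
          _ ≤ CM * (ε0 * (Kar * ‖Mc (y t)‖)) * ‖Mc (y t)‖ :=
              mul_le_mul_of_nonneg_right hb2 hMn
          _ = (β / 2) * ‖Mc (y t)‖ ^ 2 := hb3
      simp only [hV'def, hVdef]
      rw [hsplit]
      have : (0:ℝ) ≤ ‖Mc (y t)‖ ^ 2 := by positivity
      nlinarith
    have hV0 : V 0 < θ := by
      have h1 : ‖Mc (y 0)‖ ≤ CM * δ := by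
        calc ‖Mc (y 0)‖ ≤ CM * ‖y 0‖ := hMle _
          _ ≤ CM * δ := mul_le_mul_of_nonneg_left hy0 hCM0.le
      have h2 : CM * δ = r / (4 * Kar) := by
        rw [hδdef]
        field_simp
      rw [hVdef, hθdef]
      have h3 : ‖Mc (y 0)‖ ≤ r / (4 * Kar) := h2 ▸ h1
      have h4 : r / (4 * Kar) < r / (2 * Kar) := by
        apply div_lt_div_of_pos_left hr0 (by positivity)
        nlinarith
      have h5 : (0:ℝ) ≤ ‖Mc (y 0)‖ := norm_nonneg _
      nlinarith
    have hdec := lemDecay V V' β θ hβ hθ0 hVd hVnn hVb hV0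
    have hmain : ∀ t, 0 ≤ t → ‖y t‖ ≤ (Kar * CM + 1) * Real.exp (-(β / 2) * t) * ‖y 0‖ := by
      intro t ht
      have h1 : V t ≤ V 0 * Real.exp (-β * t) := hdec t ht
      have h2 : ‖Mc (y t)‖ ≤ ‖Mc (y 0)‖ * Real.exp (-(β / 2) * t) := by
        have ha : ‖Mc (y t)‖ = Real.sqrt (V t) := by
          rw [hVdef, Real.sqrt_sq (norm_nonneg _)]
        have hb : Real.sqrt (V 0 * Real.exp (-β * t))
            = ‖Mc (y 0)‖ * Real.exp (-(β / 2) * t) := by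
          rw [hVdef, Real.sqrt_mul (by positivity), Real.sqrt_sq (norm_nonneg _)]
          congr 1
          rw [show -(β / 2) * t = (-β * t) / 2 by ring, Real.exp_half]
        rw [ha, ← hb]
        exact Real.sqrt_le_sqrt h1
      have h3 : ‖Mc (y 0)‖ ≤ CM * ‖y 0‖ := hMle _
      have hexp : 0 < Real.exp (-(β / 2) * t) := Real.exp_pos _
      have h4 := hKa' (y t)
      have h5 : Kar * ‖Mc (y t)‖ ≤ Kar * (‖Mc (y 0)‖ * Real.exp (-(β / 2) * t)) :=
        mul_le_mul_of_nonneg_left h2 hKar0.le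
      have h6 : Kar * (‖Mc (y 0)‖ * Real.exp (-(β / 2) * t))
          ≤ Kar * ((CM * ‖y 0‖) * Real.exp (-(β / 2) * t)) := by
        have := mul_le_mul_of_nonneg_right h3 hexp.le
        have := mul_le_mul_of_nonneg_left this hKar0.le
        linarith
      have h7 : Kar * ((CM * ‖y 0‖) * Real.exp (-(β / 2) * t))
          ≤ (Kar * CM + 1) * Real.exp (-(β / 2) * t) * ‖y 0‖ := by
        have hy0n : (0:ℝ) ≤ ‖y 0‖ := norm_nonneg _
        nlinarith
      linarith
    refine ⟨hmain, ?_⟩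
    apply squeeze_zero_norm' (a := fun t => (Kar * CM + 1) * Real.exp (-(β / 2) * t) * ‖y 0‖)
    · filter_upwards [eventually_ge_atTop (0:ℝ)] with t ht using hmain t ht
    · have h1 : Tendsto (fun t : ℝ => Real.exp (-(β / 2) * t)) atTop (nhds 0) := by
        have h2 : Tendsto (fun t : ℝ => -(β / 2) * t) atTop atBot := by
          have h3 : Tendsto (fun t : ℝ => (β / 2) * t) atTop atTop :=
            Tendsto.const_mul_atTop (by positivity) tendsto_id
          refine (Filter.tendsto_neg_atTop_atBot.comp h3).congr fun u => ?_
          show -(β / 2 * u) = -(β / 2) * u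
          ring
        exact Real.tendsto_exp_atBot.comp h2
      have h5 := (h1.const_mul (Kar * CM + 1)).mul_const ‖y 0‖
      simpa using h5
end
end
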